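/- arXiv:2511.01396 — 4 statements merged into one kernel-verified Lean document; each statement's English description precedes it below -/
import Mathlib

section
/- Let G be an ADMG and let X, Y, Z be pairwise disjoint subsets of its vertices. Then X and Y are d-connected given Z in G if and only if G contains a structure of interest σ (as a subgraph) that connects X and Y under Z. -/
/-!  Mixed graphs, ADMGs, d-separation, structures of interest, and cluster DAGs
(following Anand et al. and the cyclic C-DAG extension). -/

/-- The way an edge is traversed along a path: `fwd` = directed edge pointing
towards the right endpoint, `bwd` = directed edge pointing towards the left
endpoint, `both` = bidirected edge (arrowheads at both endpoints). -/
inductive Link : Type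
  | fwd
  | bwd
  | both
  deriving DecidableEq

/-- Is there an arrowhead at the right endpoint of the link? -/
def Link.headRight : Link → Bool
  | .fwd => true
  | .bwd => false
  | .both => true

/-- Is there an arrowhead at the left endpoint of the link? -/
def Link.headLeft : Link → Bool
  | .fwd => false
  | .bwd => true
  | .both => true

/-- A mixed graph on a vertex set `verts`: a set of directed edges and a
(symmetric) set of bidirected edges, all between vertices of `verts`. -/
structure MixedGraph (V : Type*) where
  verts : Set V
  dir : V → V → Prop
  bi : V → V → Prop
  dir_mem : ∀ ⦃a b : V⦄, dir a b → a ∈ verts ∧ b ∈ verts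
  bi_mem : ∀ ⦃a b : V⦄, bi a b → a ∈ verts ∧ b ∈ verts
  bi_symm : ∀ ⦃a b : V⦄, bi a b → bi b a

namespace MixedGraph

variable {V C : Type*}

/-- `G.Anc v w` : there is a directed path from `v` to `w`
(`v` is an ancestor of `w`, `w` a descendant of `v`). -/
def Anc (G : MixedGraph V) : V → V → Prop := Relation.ReflTransGen G.dir

/-- The set of ancestors of the set `Z` in `G`. -/
def AncSet (G : MixedGraph V) (Z : Set V) : Set V := {v | ∃ z ∈ Z, G.Anc v z}

/-- The directed part of `G` has no directed cycle. -/
def Acyclic (G : MixedGraph V) : Prop := ∀ ⦃a b : V⦄, G.dir a b → ¬ G.Anc b a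

/-- An acyclic directed mixed graph: no directed cycle, and all edges join
distinct vertices. -/
def IsADMG (G : MixedGraph V) : Prop :=
  G.Acyclic ∧ (∀ v, ¬ G.dir v v) ∧ (∀ v, ¬ G.bi v v)

/-- `H` is a subgraph of `G`. -/
def IsSubgraph (H G : MixedGraph V) : Prop :=
  H.verts ⊆ G.verts ∧ (∀ ⦃a b : V⦄, H.dir a b → G.dir a b) ∧
    (∀ ⦃a b : V⦄, H.bi a b → G.bi a b)

/-- Adjacency, viewing all edges as undirected. -/
def Adj (G : MixedGraph V) (a b : V) : Prop := G.dir a b ∨ G.dir b a ∨ G.bi a b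

/-- `G` has a single connected component (viewing all edges as undirected). -/
def Connected (G : MixedGraph V) : Prop :=
  G.verts.Nonempty ∧ ∀ a ∈ G.verts, ∀ b ∈ G.verts, Relation.ReflTransGen G.Adj a b

/-- A root: a vertex with no outgoing directed edge. -/
def IsRoot (G : MixedGraph V) (v : V) : Prop := v ∈ G.verts ∧ ∀ w, ¬ G.dir v w

/-- The set of roots of `G`. -/
def roots (G : MixedGraph V) : Set V := {v | G.IsRoot v}

/-- A structure of interest: an ADMG with a single connected component in which
every vertex has at most one outgoing directed edge, or exactly two outgoing
directed edges and no edge with an arrowhead at it. -/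
def IsSOI (σ : MixedGraph V) : Prop :=
  σ.IsADMG ∧ σ.Connected ∧
    ∀ v ∈ σ.verts,
      (∀ ⦃w₁ w₂ : V⦄, σ.dir v w₁ → σ.dir v w₂ → w₁ = w₂) ∨
      ((∃ w₁ w₂, w₁ ≠ w₂ ∧ σ.dir v w₁ ∧ σ.dir v w₂ ∧
          ∀ w, σ.dir v w → w = w₁ ∨ w = w₂) ∧
        (∀ w, ¬ σ.dir w v) ∧ (∀ w, ¬ σ.bi v w))

/-- A structure of interest `σ` (as a subgraph of the ambient graph) connects
`X` and `Y` under `Z`: it contains a vertex of `X` and a vertex of `Y`, its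
roots lie in `X ∪ Y ∪ Z`, and no non-root vertex of `σ` lies in `Z`. -/
def Connects (σ : MixedGraph V) (X Y Z : Set V) : Prop :=
  (σ.verts ∩ X).Nonempty ∧ (σ.verts ∩ Y).Nonempty ∧
    σ.roots ⊆ X ∪ Y ∪ Z ∧ ∀ v ∈ σ.verts, ¬ σ.IsRoot v → v ∉ Z

/-- The link `l` joins `a` (left) to `b` (right) in `G`. -/
def LinkOk (G : MixedGraph V) (a : V) (l : Link) (b : V) : Prop :=
  match l with
  | .fwd => G.dir a b
  | .bwd => G.dir b a
  | .both => G.bi a b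

/-- A walk from `a`, given as the list of successive (link, next vertex) steps. -/
inductive IsWalk (G : MixedGraph V) : V → List (Link × V) → Prop
  | nil (v : V) : IsWalk G v []
  | cons {a b : V} {l : Link} {rest : List (Link × V)} :
      G.LinkOk a l b → IsWalk G b rest → IsWalk G a ((l, b) :: rest)

/-- The vertices visited by a walk. -/
def pathVerts (a : V) (steps : List (Link × V)) : List V := a :: steps.map Prod.snd

/-- The last vertex of a walk. -/
def lastVert (a : V) (steps : List (Link × V)) : V := (steps.map Prod.snd).getLastD a

/-- A path: a walk visiting pairwise distinct vertices. -/
def IsPath (G : MixedGraph V) (a : V) (steps : List (Link × V)) : Prop :=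
  G.IsWalk a steps ∧ (pathVerts a steps).Nodup

/-- Activity of the interior vertex `v`, flanked by links `l₁` and `l₂`,
relative to `Z` : if `v` is a collider it must be an ancestor of `Z`
(in particular possibly in `Z`), otherwise it must avoid `Z`. -/
def ActiveTriple (G : MixedGraph V) (Z : Set V) (l₁ : Link) (v : V) (l₂ : Link) : Prop :=
  if l₁.headRight && l₂.headLeft then v ∈ G.AncSet Z else v ∉ Z

/-- `X` and `Y` are d-connected given `Z` in `G`: some path from a vertex of
`X` to a vertex of `Y` is active given `Z`. -/
def DConnected (G : MixedGraph V) (X Y Z : Set V) : Prop :=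
  ∃ (a : V) (steps : List (Link × V)),
    G.IsPath a steps ∧ a ∈ X ∧ lastVert a steps ∈ Y ∧
    a ∉ Z ∧ lastVert a steps ∉ Z ∧
    List.Chain' (fun s t => G.ActiveTriple Z s.1 s.2 t.1) steps

/-- The mutilated graph `G_{Ā,B̲}` : every edge with an arrowhead at a vertex
of `A` and every directed edge out of a vertex of `B` is deleted. -/
def mutilate (G : MixedGraph V) (A B : Set V) : MixedGraph V where
  verts := G.verts
  dir a b := G.dir a b ∧ b ∉ A ∧ a ∉ B
  bi a b := G.bi a b ∧ a ∉ A ∧ b ∉ A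
  dir_mem := fun _ _ h => G.dir_mem h.1
  bi_mem := fun _ _ h => G.bi_mem h.1
  bi_symm := fun _ _ h => ⟨G.bi_symm h.1, h.2.2, h.2.1⟩

/-- Union of two mixed graphs. -/
def union (G H : MixedGraph V) : MixedGraph V where
  verts := G.verts ∪ H.verts
  dir a b := G.dir a b ∨ H.dir a b
  bi a b := G.bi a b ∨ H.bi a b
  dir_mem := by
    rintro a b (h | h)
    · exact ⟨Or.inl (G.dir_mem h).1, Or.inl (G.dir_mem h).2⟩
    · exact ⟨Or.inr (H.dir_mem h).1, Or.inr (H.dir_mem h).2⟩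
  bi_mem := by
    rintro a b (h | h)
    · exact ⟨Or.inl (G.bi_mem h).1, Or.inl (G.bi_mem h).2⟩
    · exact ⟨Or.inr (H.bi_mem h).1, Or.inr (H.bi_mem h).2⟩
  bi_symm := by
    rintro a b (h | h)
    · exact Or.inl (G.bi_symm h)
    · exact Or.inr (H.bi_symm h)

/-- Add the directed edge `x → y`. -/
def addDir (G : MixedGraph V) (x y : V) : MixedGraph V where
  verts := G.verts ∪ {x, y}
  dir a b := G.dir a b ∨ (a = x ∧ b = y)
  bi := G.bi
  dir_mem := by
    rintro a b (h | ⟨rfl, rfl⟩)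
    · exact ⟨Or.inl (G.dir_mem h).1, Or.inl (G.dir_mem h).2⟩
    · exact ⟨Or.inr (by simp), Or.inr (by simp)⟩
  bi_mem := fun _ _ h => ⟨Or.inl (G.bi_mem h).1, Or.inl (G.bi_mem h).2⟩
  bi_symm := fun _ _ h => G.bi_symm h

/-- Add the bidirected edge `x ↔ y`. -/
def addBi (G : MixedGraph V) (x y : V) : MixedGraph V where
  verts := G.verts ∪ {x, y}
  dir := G.dir
  bi a b := G.bi a b ∨ (a = x ∧ b = y) ∨ (a = y ∧ b = x)
  dir_mem := fun _ _ h => ⟨Or.inl (G.dir_mem h).1, Or.inl (G.dir_mem h).2⟩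
  bi_mem := by
    rintro a b (h | ⟨rfl, rfl⟩ | ⟨rfl, rfl⟩)
    · exact ⟨Or.inl (G.bi_mem h).1, Or.inl (G.bi_mem h).2⟩
    · exact ⟨Or.inr (by simp), Or.inr (by simp)⟩
    · exact ⟨Or.inr (by simp), Or.inr (by simp)⟩
  bi_symm := by
    rintro a b (h | ⟨rfl, rfl⟩ | ⟨rfl, rfl⟩)
    · exact Or.inl (G.bi_symm h)
    · exact Or.inr (Or.inr ⟨rfl, rfl⟩)
    · exact Or.inr (Or.inl ⟨rfl, rfl⟩)

/-- Delete the directed edge `x → y`. -/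
def deleteDir (G : MixedGraph V) (x y : V) : MixedGraph V where
  verts := G.verts
  dir a b := G.dir a b ∧ ¬(a = x ∧ b = y)
  bi := G.bi
  dir_mem := fun _ _ h => G.dir_mem h.1
  bi_mem := fun _ _ h => G.bi_mem h
  bi_symm := fun _ _ h => G.bi_symm h

/-- Delete the bidirected edge `x ↔ y`. -/
def deleteBi (G : MixedGraph V) (x y : V) : MixedGraph V where
  verts := G.verts
  dir := G.dir
  bi a b := G.bi a b ∧ ¬((a = x ∧ b = y) ∨ (a = y ∧ b = x))
  dir_mem := fun _ _ h => G.dir_mem h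
  bi_mem := fun _ _ h => G.bi_mem h.1
  bi_symm := fun _ _ h => ⟨G.bi_symm h.1, fun hc => h.2 (by tauto)⟩

/-- The cluster of micro-variables assigned to the cluster label `c`. -/
def clusterOf (π : V → C) (c : C) : Set V := {v | π v = c}

/-- `G` (an ADMG on all of `V`) is compatible with the cluster-level mixed
graph `GC` : `GC` is exactly the cluster graph induced by `G` via the
partition `π`. -/
def Compatible (π : V → C) (GC : MixedGraph C) (G : MixedGraph V) : Prop :=
  G.IsADMG ∧ G.verts = Set.univ ∧
    (∀ c d, GC.dir c d ↔ ∃ a b, π a = c ∧ π b = d ∧ G.dir a b) ∧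
    (∀ c d, GC.bi c d ↔ ∃ a b, π a = c ∧ π b = d ∧ G.bi a b)

/-- Within each cluster, the indices of the vertices (given by the ambient
linear order on `V`) follow a topological order of `G`. -/
def FollowsTopo [LinearOrder V] (π : V → C) (G : MixedGraph V) : Prop :=
  ∃ t : V → ℕ, Function.Injective t ∧ (∀ ⦃a b : V⦄, G.dir a b → t a < t b) ∧
    ∀ ⦃a b : V⦄, π a = π b → a < b → t a < t b

/-- The cluster `c` has cardinality at most one. -/
def SingletonCluster (π : V → C) (c : C) : Prop :=
  ∀ ⦃a b : V⦄, π a = c → π b = c → a = b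

/-- `GC` contains a directed cycle all of whose clusters have cardinality 1. -/
def HasSingletonCycle (π : V → C) (GC : MixedGraph C) : Prop :=
  ∃ c, Relation.TransGen
    (fun c₁ c₂ => GC.dir c₁ c₂ ∧ SingletonCluster π c₁ ∧ SingletonCluster π c₂) c c

/-- The canonical compatible graph of `GC` : all bidirected edges between the
relevant clusters; for self-loops all within-cluster edges following the index
order; for each directed edge between distinct clusters the edge from the
first vertex of the source to the last vertex of the target. -/
def canonicalGraph [LinearOrder V] (π : V → C) (GC : MixedGraph C) : MixedGraph V where
  verts := Set.univ
  dir a b :=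
    (π a = π b ∧ GC.dir (π a) (π b) ∧ a < b) ∨
    (π a ≠ π b ∧ GC.dir (π a) (π b) ∧
      IsLeast (clusterOf π (π a)) a ∧ IsGreatest (clusterOf π (π b)) b)
  bi a b := a ≠ b ∧ GC.bi (π a) (π b)
  dir_mem := fun _ _ _ => ⟨trivial, trivial⟩
  bi_mem := fun _ _ _ => ⟨trivial, trivial⟩
  bi_symm := fun _ _ h => ⟨h.1.symm, GC.bi_symm h.2⟩

/-- The unfolded graph of `GC` : the canonical compatible graph together with
all eligible directed edges, i.e. those corresponding to a cluster-level
directed edge whose addition to the canonical graph creates no directed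
cycle. -/
def unfoldedGraph [LinearOrder V] (π : V → C) (GC : MixedGraph C) : MixedGraph V where
  verts := Set.univ
  dir a b := (canonicalGraph π GC).dir a b ∨
    (GC.dir (π a) (π b) ∧ ((canonicalGraph π GC).addDir a b).Acyclic)
  bi a b := (canonicalGraph π GC).bi a b
  dir_mem := fun _ _ _ => ⟨trivial, trivial⟩
  bi_mem := fun _ _ _ => ⟨trivial, trivial⟩
  bi_symm := fun _ _ h => (canonicalGraph π GC).bi_symm h

/-- Failure of rule `i` of Pearl's calculus (atomically) in `G` :
`0` ↦ rule 1, `1` ↦ rule 2, `2` ↦ rule 3. -/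
def RuleFails (G : MixedGraph V) (W X Y Z : Set V) (i : Fin 3) : Prop :=
  if i = 0 then (G.mutilate W ∅).DConnected X Y (W ∪ Z)
  else if i = 1 then (G.mutilate W X).DConnected X Y (W ∪ Z)
  else (G.mutilate (W ∪ (X \ (G.mutilate W ∅).AncSet Z)) ∅).DConnected X Y (W ∪ Z)

end MixedGraph

open MixedGraph

/-!
Call a connected subgraph of `G` a witness if it meets `X` and `Y`, its roots lie in `X ∪ Y ∪ Z`
and no edge leaves `Z`; a structure of interest connecting `X` and `Y` under `Z` is a witness
satisfying the degree condition.

An active path, together with the edges by which ancestors of `Z` descend to `Z`, contains a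
witness, and a witness with a minimal set of edges satisfies the degree condition: when `v` has two
outgoing edges `v → w₁` and `v → w₂`, minimality makes each of them separate `X` from `Y`, and then
cutting the witness down to `v` and the two sides of the fork removes every other edge at `v`.

Conversely, in a witness every non-collider of a path has an outgoing edge and so avoids `Z`, while
a collider that is not an ancestor of `Z` has a root below it, which lies in `X ∪ Y`. Rerouting the
path from its other end down to that root removes the collider, so an induction on the number of
such colliders yields an active path.
-/

set_option autoImplicit false

namespace Link

def reverse : Link → Link
  | fwd => bwd
  | bwd => fwd
  | both => both

@[simp] lemma reverse_eq_bwd {l : Link} : l.reverse = bwd ↔ l = fwd := by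
  cases l <;> simp [reverse]

@[simp] lemma reverse_eq_fwd {l : Link} : l.reverse = fwd ↔ l = bwd := by
  cases l <;> simp [reverse]

end Link

namespace MixedGraph

variable {V : Type*} {G H σ : MixedGraph V} {X Y Z : Set V}

section Walks

variable {a p q u : V} {l : Link} {s t : List (Link × V)}

@[simp] lemma pathVerts_nil (a : V) : pathVerts a [] = [a] := rfl

@[simp] lemma pathVerts_cons (a : V) (st : Link × V) (s : List (Link × V)) :
    pathVerts a (st :: s) = a :: pathVerts st.2 s := rfl

lemma pathVerts_append (a : V) (s t : List (Link × V)) :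
    pathVerts a (s ++ t) = pathVerts a s ++ t.map Prod.snd := by
  simp [pathVerts]

lemma self_mem_pathVerts (a : V) (s : List (Link × V)) : a ∈ pathVerts a s :=
  List.mem_cons_self

lemma mem_pathVerts : u ∈ pathVerts a s ↔ u = a ∨ ∃ l, (l, u) ∈ s := by
  simp [pathVerts, eq_comm]

@[simp] lemma lastVert_nil (a : V) : lastVert a [] = a := rfl

@[simp] lemma lastVert_cons (a : V) (st : Link × V) (s : List (Link × V)) :
    lastVert a (st :: s) = lastVert st.2 s := by
  rw [lastVert, List.map_cons, List.getLastD_cons]; rfl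

lemma lastVert_append (a : V) (s t : List (Link × V)) :
    lastVert a (s ++ t) = lastVert (lastVert a s) t := by
  induction s generalizing a <;> simp_all

@[simp] lemma lastVert_concat (a : V) (s : List (Link × V)) (st : Link × V) :
    lastVert a (s ++ [st]) = st.2 := by
  simp [lastVert_append]

lemma lastVert_mem_pathVerts (a : V) (s : List (Link × V)) : lastVert a s ∈ pathVerts a s := by
  induction s generalizing a <;> simp_all

lemma exists_eq_append_of_mem_pathVerts (h : u ∈ pathVerts a s) :
    ∃ s₁ s₂, s = s₁ ++ s₂ ∧ lastVert a s₁ = u := by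
  obtain rfl | ⟨l, hl⟩ := mem_pathVerts.1 h
  · exact ⟨[], s, rfl, rfl⟩
  · obtain ⟨s₁, s₂, rfl⟩ := List.append_of_mem hl
    exact ⟨s₁ ++ [(l, u)], s₂, by simp, by simp⟩

lemma isWalk_cons {st : Link × V} : G.IsWalk a (st :: s) ↔ G.LinkOk a st.1 st.2 ∧ G.IsWalk st.2 s :=
  ⟨fun h => by cases h; exact ⟨‹_›, ‹_›⟩, fun h => .cons h.1 h.2⟩

lemma isWalk_append : G.IsWalk a (s ++ t) ↔ G.IsWalk a s ∧ G.IsWalk (lastVert a s) t := by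
  induction s generalizing a with
  | nil => simp [IsWalk.nil]
  | cons st s ih => simp [isWalk_cons, ih, and_assoc]

lemma LinkOk.mono (hH : H.IsSubgraph G) (h : H.LinkOk p l q) : G.LinkOk p l q := by
  cases l
  exacts [hH.2.1 h, hH.2.1 h, hH.2.2 h]

lemma LinkOk.right_mem (h : G.LinkOk p l q) : q ∈ G.verts := by
  cases l
  exacts [(G.dir_mem h).2, (G.dir_mem h).1, (G.bi_mem h).2]

lemma IsWalk.mono (hH : H.IsSubgraph G) (h : H.IsWalk a s) : G.IsWalk a s := by
  induction h with
  | nil v => exact .nil v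
  | cons hl _ ih => exact .cons (hl.mono hH) ih

lemma IsPath.of_append_left (h : G.IsPath a (s ++ t)) : G.IsPath a s :=
  ⟨(isWalk_append.1 h.1).1, by
    have := h.2
    rw [pathVerts_append] at this
    exact this.of_append_left⟩

def IsStep (a : V) (s : List (Link × V)) (p : V) (l : Link) (q : V) : Prop :=
  ∃ s₁ s₂, s = s₁ ++ (l, q) :: s₂ ∧ lastVert a s₁ = p

lemma IsWalk.linkOk (h : G.IsWalk a s) (hst : IsStep a s p l q) : G.LinkOk p l q := by
  obtain ⟨s₁, s₂, rfl, rfl⟩ := hst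
  exact (isWalk_cons.1 (isWalk_append.1 h).2).1

lemma IsStep.left_mem (h : IsStep a s p l q) : p ∈ pathVerts a s := by
  obtain ⟨s₁, s₂, rfl, rfl⟩ := h
  rw [pathVerts_append]
  exact List.mem_append_left _ (lastVert_mem_pathVerts a s₁)

lemma IsStep.right_mem (h : IsStep a s p l q) : q ∈ pathVerts a s := by
  obtain ⟨s₁, s₂, rfl, -⟩ := h
  exact mem_pathVerts.2 (Or.inr ⟨l, by simp⟩)

lemma isStep_of_mem (h : (l, q) ∈ s) : ∃ p, IsStep a s p l q := by
  obtain ⟨s₁, s₂, rfl⟩ := List.append_of_mem h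
  exact ⟨_, s₁, s₂, rfl, rfl⟩

lemma IsWalk.mem_verts (h : G.IsWalk a s) (ha : a ∈ G.verts) (hu : u ∈ pathVerts a s) :
    u ∈ G.verts := by
  obtain rfl | ⟨l, hl⟩ := mem_pathVerts.1 hu
  · exact ha
  · obtain ⟨p, hp⟩ := isStep_of_mem (a := a) hl
    exact (h.linkOk hp).right_mem

end Walks

section Junctions

variable {a p q u : V} {l : Link} {s t : List (Link × V)} {j : Link × V × Link}

/-- The interior vertices of a walk, each with the links entering and leaving it. -/
def junctions : List (Link × V) → List (Link × V × Link)
  | [] => []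
  | [_] => []
  | st :: st' :: s => (st.1, st.2, st'.1) :: junctions (st' :: s)

@[simp] lemma junctions_nil : junctions ([] : List (Link × V)) = [] := rfl

@[simp] lemma junctions_singleton (st : Link × V) : junctions [st] = [] := rfl

@[simp] lemma junctions_cons_cons (st st' : Link × V) (s : List (Link × V)) :
    junctions (st :: st' :: s) = (st.1, st.2, st'.1) :: junctions (st' :: s) := rfl

lemma isChain_iff_forall_mem_junctions {P : Link → V → Link → Prop} :
    ∀ {s : List (Link × V)},
      List.IsChain (fun st st' => P st.1 st.2 st'.1) s ↔ ∀ j ∈ junctions s, P j.1 j.2.1 j.2.2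
  | [] | [_] => by simp
  | st :: st' :: s => by
      simp [isChain_iff_forall_mem_junctions (s := st' :: s)]

lemma junctions_append_cons_cons (t : List (Link × V)) (st st' : Link × V) (u : List (Link × V)) :
    junctions (t ++ st :: st' :: u) =
      junctions (t ++ [st]) ++ (st.1, st.2, st'.1) :: junctions (st' :: u) := by
  induction t with
  | nil => rfl
  | cons x t ih =>
      cases t with
      | nil => rfl
      | cons y t => simpa using ih

lemma mem_junctions_of_eq {st st' : Link × V} {r : List (Link × V)} (h : s = t ++ st :: st' :: r) :
    (st.1, st.2, st'.1) ∈ junctions s := by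
  simp [h, junctions_append_cons_cons]

lemma exists_eq_of_mem_junctions :
    ∀ {s : List (Link × V)}, j ∈ junctions s → ∃ t w u, s = t ++ (j.1, j.2.1) :: (j.2.2, w) :: u
  | [], h | [_], h => by simp at h
  | st :: st' :: s, h => by
      rcases List.mem_cons.1 h with rfl | h
      · exact ⟨[], st'.2, s, rfl⟩
      · obtain ⟨t, w, u, hs⟩ := exists_eq_of_mem_junctions h
        exact ⟨st :: t, w, u, by simp [hs]⟩

lemma exists_mem_of_mem_junctions_cons :
    ∀ {st : Link × V} {s : List (Link × V)}, j ∈ junctions (st :: s) → ∃ w, (j.2.2, w) ∈ s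
  | _, [], h => by simp at h
  | st, st' :: s, h => by
      rcases List.mem_cons.1 h with rfl | h
      · exact ⟨st'.2, List.mem_cons_self⟩
      · obtain ⟨w, hw⟩ := exists_mem_of_mem_junctions_cons h
        exact ⟨w, List.mem_cons_of_mem _ hw⟩

lemma exists_junctions_append (s t : List (Link × V)) :
    ∃ J, junctions (s ++ t) = junctions s ++ J ∧ ∀ j ∈ J, ∃ w, (j.2.2, w) ∈ t := by
  rcases t with _ | ⟨st', u⟩
  · exact ⟨[], by simp, by simp⟩
  rcases List.eq_nil_or_concat s with rfl | ⟨s, st, rfl⟩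
  · exact ⟨_, rfl, fun j hj => exists_mem_of_mem_junctions_cons (st := st') (s := u) hj |>.imp
      fun _ h => List.mem_cons_of_mem _ h⟩
  refine ⟨_, by simpa using junctions_append_cons_cons s st st' u, fun j hj => ?_⟩
  rcases List.mem_cons.1 hj with rfl | hj
  · exact ⟨st'.2, List.mem_cons_self⟩
  · exact (exists_mem_of_mem_junctions_cons hj).imp fun _ h => List.mem_cons_of_mem _ h

lemma isStep_of_mem_junctions (h : j ∈ junctions s) :
    (∃ p, IsStep a s p j.1 j.2.1) ∧ ∃ w, IsStep a s j.2.1 j.2.2 w := by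
  obtain ⟨t, w, u, rfl⟩ := exists_eq_of_mem_junctions h
  exact ⟨⟨_, t, _, rfl, rfl⟩, ⟨w, t ++ [(j.1, j.2.1)], u, by simp, by simp⟩⟩

lemma IsStep.eq_or_mem_junctions_left (h : IsStep a s p l q) :
    p = a ∨ ∃ l₀, (l₀, p, l) ∈ junctions s := by
  obtain ⟨s₁, s₂, rfl, rfl⟩ := h
  rcases List.eq_nil_or_concat s₁ with rfl | ⟨s₀, st, rfl⟩
  · exact Or.inl rfl
  · refine Or.inr ⟨st.1, ?_⟩
    simpa using mem_junctions_of_eq (t := s₀) (st := st) (st' := (l, q)) (r := s₂) (by simp)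

lemma IsStep.eq_or_mem_junctions_right (h : IsStep a s p l q) :
    q = lastVert a s ∨ ∃ l₂, (l, q, l₂) ∈ junctions s := by
  obtain ⟨s₁, s₂, rfl, rfl⟩ := h
  rcases s₂ with _ | ⟨st, s₂⟩
  · exact Or.inl (by simp)
  · exact Or.inr ⟨st.1, mem_junctions_of_eq (t := s₁) (r := s₂) rfl⟩

lemma eq_or_mem_junctions_of_mem_pathVerts (h : u ∈ pathVerts a s) :
    u = a ∨ u = lastVert a s ∨ ∃ l l', (l, u, l') ∈ junctions s := by
  obtain rfl | ⟨l, hl⟩ := mem_pathVerts.1 h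
  · exact Or.inl rfl
  · obtain ⟨p, hp⟩ := isStep_of_mem (a := a) hl
    exact Or.inr (hp.eq_or_mem_junctions_right.imp_right fun ⟨l₂, h⟩ => ⟨l, l₂, h⟩)

/-- The reversed walk starts at `lastVert a s`. -/
def reverseSteps : V → List (Link × V) → List (Link × V)
  | _, [] => []
  | a, st :: s => reverseSteps st.2 s ++ [(st.1.reverse, a)]

lemma pathVerts_reverseSteps (a : V) (s : List (Link × V)) :
    pathVerts (lastVert a s) (reverseSteps a s) = (pathVerts a s).reverse := by
  induction s generalizing a with
  | nil => rfl
  | cons st s ih => simp [reverseSteps, pathVerts_append, ih]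

lemma lastVert_reverseSteps (a : V) (s : List (Link × V)) :
    lastVert (lastVert a s) (reverseSteps a s) = a := by
  rcases s with _ | ⟨st, s⟩ <;> simp [reverseSteps]

lemma LinkOk.reverse (h : G.LinkOk p l q) : G.LinkOk q l.reverse p := by
  cases l
  exacts [h, h, G.bi_symm h]

lemma IsWalk.reverseSteps (h : G.IsWalk a s) : G.IsWalk (lastVert a s) (reverseSteps a s) := by
  induction h with
  | nil v => exact .nil v
  | @cons a b l s hl _ ih =>
      simp only [lastVert_cons, MixedGraph.reverseSteps]
      refine isWalk_append.2 ⟨ih, isWalk_cons.2 ⟨?_, .nil a⟩⟩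
      rw [lastVert_reverseSteps]
      exact hl.reverse

lemma IsPath.reverseSteps (h : G.IsPath a s) : G.IsPath (lastVert a s) (reverseSteps a s) :=
  ⟨h.1.reverseSteps, by rw [pathVerts_reverseSteps]; exact List.nodup_reverse.2 h.2⟩

lemma junctions_reverseSteps :
    ∀ (a : V) (s : List (Link × V)), junctions (reverseSteps a s) =
      ((junctions s).map fun j => (j.2.2.reverse, j.2.1, j.1.reverse)).reverse
  | _, [] | _, [_] => by simp [reverseSteps]
  | a, st :: st' :: s => by
      have h := junctions_append_cons_cons (reverseSteps st'.2 s) (st'.1.reverse, st.2)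
        (st.1.reverse, a) []
      simp only [junctions_singleton] at h
      have ih := junctions_reverseSteps st.2 (st' :: s)
      simp only [reverseSteps] at ih
      simp [reverseSteps, h, ih]

end Junctions

section Activity

variable {a v : V} {l l' : Link} {s t : List (Link × V)}

lemma activeTriple_iff :
    G.ActiveTriple Z l v l' ↔
      ((l = .bwd ∨ l' = .fwd) → v ∉ Z) ∧ (l ≠ .bwd → l' ≠ .fwd → v ∈ G.AncSet Z) := by
  cases l <;> cases l' <;> simp [ActiveTriple, Link.headRight, Link.headLeft]

lemma activeTriple_reverse_iff :
    G.ActiveTriple Z l'.reverse v l.reverse ↔ G.ActiveTriple Z l v l' := by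
  simp only [activeTriple_iff, Link.reverse_eq_bwd, Link.reverse_eq_fwd, ne_eq]
  tauto

lemma DConnected.symm (h : G.DConnected X Y Z) : G.DConnected Y X Z := by
  obtain ⟨a, s, hs, ha, hb, haZ, hbZ, hact⟩ := h
  refine ⟨lastVert a s, reverseSteps a s, hs.reverseSteps, hb, ?_, hbZ, ?_, ?_⟩
  · rwa [lastVert_reverseSteps]
  · rwa [lastVert_reverseSteps]
  · refine isChain_iff_forall_mem_junctions.2 fun j hj => ?_
    simp only [junctions_reverseSteps, List.mem_reverse, List.mem_map] at hj
    obtain ⟨j, hj, rfl⟩ := hj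
    exact activeTriple_reverse_iff.2 (isChain_iff_forall_mem_junctions.1 hact j hj)

/-- A junction at a collider that is not an ancestor of `Z`. -/
def IsBlocked (G : MixedGraph V) (Z : Set V) (j : Link × V × Link) : Prop :=
  j.1 ≠ .bwd ∧ j.2.2 ≠ .fwd ∧ j.2.1 ∉ G.AncSet Z

open Classical in
noncomputable def blockedCount (G : MixedGraph V) (Z : Set V) (s : List (Link × V)) : ℕ :=
  (junctions s).countP fun j => G.IsBlocked Z j

lemma blockedCount_eq_zero_iff : G.blockedCount Z s = 0 ↔ ∀ j ∈ junctions s, ¬ G.IsBlocked Z j := by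
  simp [blockedCount, List.countP_eq_zero]

lemma blockedCount_le_append : G.blockedCount Z s ≤ G.blockedCount Z (s ++ t) := by
  obtain ⟨J, hJ, -⟩ := exists_junctions_append s t
  simp [blockedCount, hJ, List.countP_append]

lemma blockedCount_append_of_forall_fwd (ht : ∀ st ∈ t, st.1 = .fwd) :
    G.blockedCount Z (s ++ t) = G.blockedCount Z s := by
  obtain ⟨J, hJ, hJt⟩ := exists_junctions_append s t
  suffices ∀ j ∈ J, ¬ G.IsBlocked Z j by
    simpa [blockedCount, hJ, List.countP_append, List.countP_eq_zero] using this
  intro j hj hb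
  obtain ⟨w, hw⟩ := hJt j hj
  exact hb.2.1 (ht _ hw)

lemma blockedCount_lt {st st' : Link × V} {r : List (Link × V)}
    (hb : G.IsBlocked Z (st.1, st.2, st'.1)) :
    G.blockedCount Z (t ++ [st]) < G.blockedCount Z (t ++ st :: st' :: r) := by
  simp [blockedCount, junctions_append_cons_cons, List.countP_append, hb]

lemma blockedCount_reverseSteps (a : V) (s : List (Link × V)) :
    G.blockedCount Z (reverseSteps a s) = G.blockedCount Z s := by
  simp only [blockedCount, junctions_reverseSteps, List.countP_reverse, List.countP_map]
  congr 1
  funext j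
  rw [Bool.eq_iff_iff]
  simp only [Function.comp_apply, decide_eq_true_iff]
  simp only [IsBlocked, ne_eq, Link.reverse_eq_bwd, Link.reverse_eq_fwd]
  tauto

/-- A non-collider of the walk has an outgoing edge in `σ`, so it avoids `Z`. -/
lemma isChain_activeTriple_of_blockedCount_eq_zero (hZ : ∀ ⦃v w⦄, σ.dir v w → v ∉ Z)
    (hs : σ.IsWalk a s) (h0 : G.blockedCount Z s = 0) :
    List.IsChain (fun st st' => G.ActiveTriple Z st.1 st.2 st'.1) s := by
  refine isChain_iff_forall_mem_junctions.2 fun j hj => activeTriple_iff.2 ⟨?_, ?_⟩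
  · obtain ⟨⟨p, hp⟩, ⟨w, hw⟩⟩ := isStep_of_mem_junctions (a := a) hj
    rintro (h | h)
    · rw [h] at hp
      exact hZ (hs.linkOk hp)
    · rw [h] at hw
      exact hZ (hs.linkOk hw)
  · intro h₁ h₂
    by_contra hZ'
    exact blockedCount_eq_zero_iff.1 h0 j hj ⟨h₁, h₂, hZ'⟩

end Activity

section Subgraphs

variable {a p q r v w x z : V} {s : List (Link × V)} {T : Set V}

abbrev Reachable (H : MixedGraph V) : V → V → Prop := Relation.ReflTransGen H.Adj

lemma Adj.symm (h : H.Adj p q) : H.Adj q p := by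
  rcases h with h | h | h
  exacts [Or.inr (Or.inl h), Or.inl h, Or.inr (Or.inr (H.bi_symm h))]

lemma Reachable.symm (h : H.Reachable p q) : H.Reachable q p := by
  induction h with
  | refl => exact .refl
  | tail _ hbc ih => exact ih.head hbc.symm

lemma Adj.mono (hH : H.IsSubgraph G) (h : H.Adj p q) : G.Adj p q := by
  rcases h with h | h | h
  exacts [Or.inl (hH.2.1 h), Or.inr (Or.inl (hH.2.1 h)), Or.inr (Or.inr (hH.2.2 h))]

lemma Reachable.mono (hH : H.IsSubgraph G) (h : H.Reachable p q) : G.Reachable p q :=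
  Relation.ReflTransGen.mono (fun _ _ => Adj.mono hH) _ _ h

lemma Adj.exists_linkOk (h : H.Adj p q) : ∃ l, H.LinkOk p l q := by
  rcases h with h | h | h
  exacts [⟨.fwd, h⟩, ⟨.bwd, h⟩, ⟨.both, h⟩]

lemma reachable_of_mem_pathVerts (h : ∀ p l q, IsStep a s p l q → H.Adj p q)
    (hu : r ∈ pathVerts a s) : H.Reachable a r := by
  obtain ⟨s₁, s₂, rfl, rfl⟩ := exists_eq_append_of_mem_pathVerts hu
  clear hu
  induction s₁ using List.reverseRecOn generalizing s₂ with
  | nil => exact .refl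
  | append_singleton s₁ st ih =>
      rw [List.append_assoc, List.singleton_append] at h
      rw [lastVert_concat]
      exact (ih (st :: s₂) h).tail (h _ st.1 st.2 ⟨s₁, s₂, rfl, rfl⟩)

lemma IsSubgraph.trans {F : MixedGraph V} (h₁ : F.IsSubgraph H) (h₂ : H.IsSubgraph G) :
    F.IsSubgraph G :=
  ⟨h₁.1.trans h₂.1, fun _ _ h => h₂.2.1 (h₁.2.1 h), fun _ _ h => h₂.2.2 (h₁.2.2 h)⟩

lemma IsSubgraph.union {H' : MixedGraph V} (h : H.IsSubgraph G) (h' : H'.IsSubgraph G) :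
    (H.union H').IsSubgraph G :=
  ⟨Set.union_subset h.1 h'.1, fun _ _ hd => hd.elim (h.2.1 ·) (h'.2.1 ·),
    fun _ _ hb => hb.elim (h.2.2 ·) (h'.2.2 ·)⟩

lemma isSubgraph_union_left (H H' : MixedGraph V) : H.IsSubgraph (H.union H') :=
  ⟨Set.subset_union_left, fun _ _ => Or.inl, fun _ _ => Or.inl⟩

lemma deleteDir_isSubgraph (H : MixedGraph V) (v w : V) : (H.deleteDir v w).IsSubgraph H :=
  ⟨subset_rfl, fun _ _ h => h.1, fun _ _ h => h⟩

lemma deleteDir_comm (H : MixedGraph V) (v w v' w' : V) :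
    (H.deleteDir v w).deleteDir v' w' = (H.deleteDir v' w').deleteDir v w := by
  simp only [deleteDir, and_right_comm]

lemma Anc.mono (hH : H.IsSubgraph G) (h : H.Anc p q) : G.Anc p q :=
  Relation.ReflTransGen.mono (fun _ _ => (hH.2.1 ·)) _ _ h

lemma IsADMG.mono (hG : G.IsADMG) (hH : H.IsSubgraph G) : H.IsADMG :=
  ⟨fun _ _ hd hanc => hG.1 (hH.2.1 hd) (hanc.mono hH), fun v hd => hG.2.1 v (hH.2.1 hd),
    fun v hb => hG.2.2 v (hH.2.2 hb)⟩

lemma IsADMG.ne_of_adj (hG : G.IsADMG) (h : G.Adj p q) : p ≠ q := by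
  rintro rfl
  rcases h with h | h | h
  exacts [hG.2.1 p h, hG.2.1 p h, hG.2.2 p h]

def restrict (H : MixedGraph V) (T : Set V) : MixedGraph V where
  verts := H.verts ∩ T
  dir a b := H.dir a b ∧ a ∈ T ∧ b ∈ T
  bi a b := H.bi a b ∧ a ∈ T ∧ b ∈ T
  dir_mem := fun _ _ h => ⟨⟨(H.dir_mem h.1).1, h.2.1⟩, (H.dir_mem h.1).2, h.2.2⟩
  bi_mem := fun _ _ h => ⟨⟨(H.bi_mem h.1).1, h.2.1⟩, (H.bi_mem h.1).2, h.2.2⟩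
  bi_symm := fun _ _ h => ⟨H.bi_symm h.1, h.2.2, h.2.1⟩

lemma restrict_isSubgraph (H : MixedGraph V) (T : Set V) : (H.restrict T).IsSubgraph H :=
  ⟨Set.inter_subset_left, fun _ _ h => h.1, fun _ _ h => h.1⟩

lemma Adj.restrict (h : H.Adj p q) (hp : p ∈ T) (hq : q ∈ T) : (H.restrict T).Adj p q := by
  rcases h with h | h | h
  exacts [Or.inl ⟨h, hp, hq⟩, Or.inr (Or.inl ⟨h, hq, hp⟩), Or.inr (Or.inr ⟨h, hp, hq⟩)]

lemma Reachable.restrict {F : MixedGraph V} (hF : F.IsSubgraph H)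
    (hT : ∀ q, F.Reachable p q → q ∈ T) (h : F.Reachable p q) : (H.restrict T).Reachable p q := by
  induction h with
  | refl => exact .refl
  | @tail b c hb hbc ih =>
      exact ih.tail ((hbc.mono hF).restrict (hT b hb) (hT c (hb.tail hbc)))

lemma roots_restrict_subset (hT : ∀ r ∈ T, ∀ t, H.dir r t → ∃ t' ∈ T, H.dir r t') :
    (H.restrict T).roots ⊆ H.roots := by
  rintro r ⟨⟨hr, hrT⟩, hno⟩
  refine ⟨hr, fun t ht => ?_⟩
  obtain ⟨t', ht'T, ht'⟩ := hT r hrT t ht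
  exact hno t' ⟨ht', hrT, ht'T⟩

def component (H : MixedGraph V) (x : V) : MixedGraph V := H.restrict {u | H.Reachable x u}

lemma reachable_component (h : H.Reachable x p) : (H.component x).Reachable x p :=
  h.restrict (F := H) ⟨subset_rfl, fun _ _ => id, fun _ _ => id⟩ (fun _ => id)

lemma connected_component (hx : x ∈ H.verts) : (H.component x).Connected :=
  ⟨⟨x, hx, .refl⟩, fun _ hp _ hq =>
    (reachable_component hp.2).symm.trans (reachable_component hq.2)⟩

lemma roots_component_subset : (H.component x).roots ⊆ H.roots :=
  roots_restrict_subset fun _ hr t ht => ⟨t, hr.tail (Or.inl ht), ht⟩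

lemma Reachable.deleteDir (h : H.Reachable z p) :
    (H.deleteDir v w).Reachable z p ∨ (H.deleteDir v w).Reachable v p ∨
      (H.deleteDir v w).Reachable w p := by
  induction h with
  | refl => exact Or.inl .refl
  | @tail b c _ hbc ih =>
      by_cases hc : c = v ∨ c = w
      · rcases hc with rfl | rfl
        exacts [Or.inr (Or.inl .refl), Or.inr (Or.inr .refl)]
      rw [not_or] at hc
      have hbc' : (H.deleteDir v w).Adj b c := by
        rcases hbc with h | h | h
        exacts [Or.inl ⟨h, fun e => hc.2 e.2⟩, Or.inr (Or.inl ⟨h, fun e => hc.1 e.1⟩),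
          Or.inr (Or.inr h)]
      exact ih.imp (·.tail hbc') (Or.imp (·.tail hbc') (·.tail hbc'))

def edgeSets (H : MixedGraph V) : Set (V × V) × Set (V × V) :=
  ({e | H.dir e.1 e.2}, {e | H.bi e.1 e.2})

lemma edgeSets_mono (h : H.IsSubgraph G) : H.edgeSets ≤ G.edgeSets :=
  ⟨fun _ he => h.2.1 he, fun _ he => h.2.2 he⟩

lemma edgeSets_lt_of_dir (h : H.IsSubgraph G) (hpq : G.dir p q) (hn : ¬ H.dir p q) :
    H.edgeSets < G.edgeSets :=
  Prod.lt_iff.2 <| Or.inl ⟨⟨fun _ he => h.2.1 he, fun hs => hn (hs (a := (p, q)) hpq)⟩,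
    fun _ he => h.2.2 he⟩

lemma edgeSets_lt_of_bi (h : H.IsSubgraph G) (hpq : G.bi p q) (hn : ¬ H.bi p q) :
    H.edgeSets < G.edgeSets :=
  Prod.lt_iff.2 <| Or.inr ⟨fun _ he => h.2.1 he,
    ⟨fun _ he => h.2.2 he, fun hs => hn (hs (a := (p, q)) hpq)⟩⟩

lemma edgeSets_restrict_lt (h : H.Adj p q) (hq : q ∉ T) : (H.restrict T).edgeSets < H.edgeSets := by
  rcases h with h | h | h
  · exact edgeSets_lt_of_dir (restrict_isSubgraph H T) h fun h' => hq h'.2.2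
  · exact edgeSets_lt_of_dir (restrict_isSubgraph H T) h fun h' => hq h'.2.1
  · exact edgeSets_lt_of_bi (restrict_isSubgraph H T) h fun h' => hq h'.2.2

end Subgraphs

section Paths

variable {a b r v : V} {s : List (Link × V)} {j : Link × V × Link}

lemma IsPath.mono (hH : H.IsSubgraph G) (h : H.IsPath a s) : G.IsPath a s :=
  ⟨h.1.mono hH, h.2⟩

/-- A path can be continued along `R`-steps from its end, cutting it back whenever it would
revisit a vertex. -/
lemma IsPath.exists_extend {R : V → V → Prop} {P : Link → Prop}
    (hR : ∀ p q, R p q → ∃ l, P l ∧ H.LinkOk p l q) (hs : H.IsPath a s)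
    (hr : Relation.ReflTransGen R (lastVert a s) r) :
    ∃ s₁ s₂ t, s = s₁ ++ s₂ ∧ (∀ st ∈ t, P st.1) ∧ H.IsPath a (s₁ ++ t) ∧
      lastVert a (s₁ ++ t) = r := by
  induction hr with
  | refl => exact ⟨s, [], [], by simp, by simp, by simpa using hs, by simp⟩
  | @tail q z _ hqz ih =>
      obtain ⟨s₁, s₂, t, rfl, hP, hp, hq⟩ := ih
      obtain ⟨l, hl, hlink⟩ := hR q z hqz
      by_cases hz : z ∈ pathVerts a (s₁ ++ t)
      · rw [pathVerts_append, List.mem_append] at hz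
        rcases hz with hz | hz
        · obtain ⟨t₁, t₂, rfl, rfl⟩ := exists_eq_append_of_mem_pathVerts hz
          refine ⟨t₁, t₂ ++ s₂, [], by simp, by simp, ?_, by simp⟩
          rw [List.append_assoc] at hp
          simpa using hp.of_append_left
        · obtain ⟨st, hst, rfl⟩ := List.mem_map.1 hz
          obtain ⟨t₁, t₂, rfl⟩ := List.append_of_mem hst
          refine ⟨s₁, s₂, t₁ ++ [st], rfl, fun st' h => hP st' ?_, ?_, by simp [lastVert_append]⟩
          · simp only [List.mem_append, List.mem_cons] at h ⊢
            tauto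
          · rw [show s₁ ++ (t₁ ++ st :: t₂) = s₁ ++ (t₁ ++ [st]) ++ t₂ by simp] at hp
            exact hp.of_append_left
      · refine ⟨s₁, s₂, t ++ [(l, z)], rfl, ?_, ⟨?_, ?_⟩, by simp [lastVert_append]⟩
        · simp only [List.mem_append, List.mem_singleton]
          rintro st (h | rfl)
          exacts [hP st h, hl]
        · rw [← List.append_assoc]
          exact isWalk_append.2 ⟨hp.1, isWalk_cons.2 ⟨hq ▸ hlink, .nil z⟩⟩
        · rw [← List.append_assoc, pathVerts_append]
          simpa [List.nodup_append] using ⟨hp.2, fun x hx hxz => hz (hxz ▸ hx)⟩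

lemma exists_isPath_of_reachable (h : H.Reachable a b) : ∃ s, H.IsPath a s ∧ lastVert a s = b := by
  obtain ⟨s₁, -, t, -, -, hp, hl⟩ := IsPath.exists_extend (P := fun _ => True)
    (fun _ _ h => h.exists_linkOk.imp fun _ hl => ⟨trivial, hl⟩) (s := [])
    ⟨.nil a, by simp⟩ h
  exact ⟨_, hp, hl⟩

/-- The rerouted path leaves the old one where the directed path from the blocked collider last
meets it, so the new junction there is not a collider. -/
lemma IsPath.exists_blockedCount_lt (hs : σ.IsPath a s) (hj : j ∈ junctions s)
    (hb : G.IsBlocked Z j) (hr : σ.Anc j.2.1 r) :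
    ∃ s', σ.IsPath a s' ∧ lastVert a s' = r ∧ G.blockedCount Z s' < G.blockedCount Z s := by
  obtain ⟨t, w, u, rfl⟩ := exists_eq_of_mem_junctions hj
  have hpre : σ.IsPath a (t ++ [(j.1, j.2.1)]) :=
    (show σ.IsPath a (t ++ [(j.1, j.2.1)] ++ (j.2.2, w) :: u) by simpa using hs).of_append_left
  obtain ⟨s₁, s₂, t', hpre_eq, hfwd, hp, hl⟩ :=
    hpre.exists_extend (R := σ.dir) (P := (· = Link.fwd)) (r := r) (fun _ _ h => ⟨.fwd, rfl, h⟩)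
      (by rw [lastVert_concat]; exact hr)
  refine ⟨s₁ ++ t', hp, hl, ?_⟩
  calc G.blockedCount Z (s₁ ++ t') = G.blockedCount Z s₁ := blockedCount_append_of_forall_fwd hfwd
    _ ≤ G.blockedCount Z (t ++ [(j.1, j.2.1)]) := hpre_eq ▸ blockedCount_le_append
    _ < _ := blockedCount_lt hb

lemma exists_anc_isRoot [Finite V] (hH : H.Acyclic) (hv : v ∈ H.verts) :
    ∃ r, H.Anc v r ∧ H.IsRoot r := by
  have : IsTrans V fun a b => Relation.TransGen H.dir b a := ⟨fun _ _ _ h₁ h₂ => h₂.trans h₁⟩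
  have : Std.Irrefl fun a b : V => Relation.TransGen H.dir b a := ⟨fun a h => by
    obtain ⟨b, hab, hba⟩ := Relation.TransGen.head'_iff.1 h
    exact hH hab hba⟩
  obtain ⟨r, hr, hmin⟩ := (Finite.wellFounded_of_trans_of_irrefl
    fun a b : V => Relation.TransGen H.dir b a).has_min {r | H.Anc v r} ⟨v, .refl⟩
  refine ⟨r, hr, ?_, fun c hc => hmin c (hr.tail hc) (.single hc)⟩
  rcases Relation.ReflTransGen.cases_tail hr with rfl | ⟨c, -, hc⟩
  exacts [hv, (H.dir_mem hc).2]

end Paths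

/-- Everything a structure of interest connecting `X` and `Y` under `Z` must satisfy, except the
degree condition. -/
structure IsWitness (G : MixedGraph V) (X Y Z : Set V) (σ : MixedGraph V) : Prop where
  isSubgraph : σ.IsSubgraph G
  connected : σ.Connected
  inter_left : (σ.verts ∩ X).Nonempty
  inter_right : (σ.verts ∩ Y).Nonempty
  roots_subset : σ.roots ⊆ X ∪ Y ∪ Z
  not_mem_of_dir : ∀ ⦃v w⦄, σ.dir v w → v ∉ Z

section Backward

variable {a : V} {s : List (Link × V)}

lemma IsWitness.dConnected_of_isPath (hσ : G.IsWitness X Y Z σ) (hXZ : Disjoint X Z)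
    (hYZ : Disjoint Y Z) (hs : σ.IsPath a s) (h0 : G.blockedCount Z s = 0)
    (hends : a ∈ X ∧ lastVert a s ∈ Y ∨ a ∈ Y ∧ lastVert a s ∈ X) : G.DConnected X Y Z := by
  have hact := isChain_activeTriple_of_blockedCount_eq_zero hσ.not_mem_of_dir hs.1 h0
  have hp := hs.mono hσ.isSubgraph
  rcases hends with ⟨ha, hb⟩ | ⟨ha, hb⟩
  · exact ⟨a, s, hp, ha, hb, Set.disjoint_left.1 hXZ ha, Set.disjoint_left.1 hYZ hb, hact⟩
  · exact DConnected.symm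
      ⟨a, s, hp, ha, hb, Set.disjoint_left.1 hYZ ha, Set.disjoint_left.1 hXZ hb, hact⟩

lemma IsWitness.exists_anc_mem_union [Finite V] (hσ : G.IsWitness X Y Z σ) (hG : G.IsADMG)
    {v : V} (hv : v ∈ σ.verts) (hvZ : v ∉ G.AncSet Z) : ∃ r, σ.Anc v r ∧ r ∈ X ∪ Y := by
  obtain ⟨r, hvr, hr⟩ := exists_anc_isRoot (hG.mono hσ.isSubgraph).1 hv
  refine ⟨r, hvr, ?_⟩
  rcases hσ.roots_subset hr with h | h
  exacts [h, absurd ⟨r, h, hvr.mono hσ.isSubgraph⟩ hvZ]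

lemma IsWitness.dConnected [Finite V] (hσ : G.IsWitness X Y Z σ) (hG : G.IsADMG)
    (hXZ : Disjoint X Z) (hYZ : Disjoint Y Z) : G.DConnected X Y Z := by
  suffices key : ∀ n a s, G.blockedCount Z s = n → σ.IsPath a s →
      (a ∈ X ∧ lastVert a s ∈ Y ∨ a ∈ Y ∧ lastVert a s ∈ X) → G.DConnected X Y Z by
    obtain ⟨x, hxσ, hx⟩ := hσ.inter_left
    obtain ⟨y, hyσ, hy⟩ := hσ.inter_right
    obtain ⟨s, hs, rfl⟩ := exists_isPath_of_reachable (hσ.connected.2 x hxσ y hyσ)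
    exact key _ x s rfl hs (Or.inl ⟨hx, hy⟩)
  intro n
  induction n using Nat.strong_induction_on with
  | _ n ih =>
  rintro a s rfl hs hends
  by_cases h0 : G.blockedCount Z s = 0
  · exact hσ.dConnected_of_isPath hXZ hYZ hs h0 hends
  obtain ⟨j, hj, hb⟩ : ∃ j ∈ junctions s, G.IsBlocked Z j := by
    simpa [blockedCount_eq_zero_iff] using h0
  have hv : j.2.1 ∈ σ.verts := by
    obtain ⟨⟨p, hp⟩, -⟩ := isStep_of_mem_junctions (a := a) hj
    exact (hs.1.linkOk hp).right_mem
  obtain ⟨r, hvr, hrXY⟩ := hσ.exists_anc_mem_union hG hv hb.2.2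
  have reroute : ∀ a' s' j', σ.IsPath a' s' → j' ∈ junctions s' → G.IsBlocked Z j' →
      j'.2.1 = j.2.1 → G.blockedCount Z s' = G.blockedCount Z s →
      (a' ∈ X ∧ r ∈ Y ∨ a' ∈ Y ∧ r ∈ X) → G.DConnected X Y Z := by
    intro a' s' j' hs' hj' hb' hv' hn hends'
    obtain ⟨s'', hs'', hl, hlt⟩ := hs'.exists_blockedCount_lt hj' hb' (hv' ▸ hvr)
    exact ih _ (hn ▸ hlt) a' s'' rfl hs'' (hl ▸ hends')
  by_cases hfar : a ∈ X ∧ r ∈ Y ∨ a ∈ Y ∧ r ∈ X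
  · exact reroute a s j hs hj hb rfl rfl hfar
  · refine reroute _ _ (j.2.2.reverse, j.2.1, j.1.reverse) hs.reverseSteps ?_ ?_ rfl
      (blockedCount_reverseSteps a s) ?_
    · rw [junctions_reverseSteps]
      exact List.mem_reverse.2 (List.mem_map.2 ⟨j, hj, rfl⟩)
    · simpa [IsBlocked, and_comm, and_left_comm] using hb
    · simp only [Set.mem_union] at hrXY
      tauto

end Backward

lemma IsWitness.connects (hσ : G.IsWitness X Y Z σ) : σ.Connects X Y Z :=
  ⟨hσ.inter_left, hσ.inter_right, hσ.roots_subset,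
    fun _ hv hnr hvZ => hnr ⟨hv, fun _ hw => hσ.not_mem_of_dir hw hvZ⟩⟩

lemma IsWitness.of_connects (hσG : σ.IsSubgraph G) (hconn : σ.Connected)
    (h : σ.Connects X Y Z) : G.IsWitness X Y Z σ :=
  ⟨hσG, hconn, h.1, h.2.1, h.2.2.1,
    fun v w hvw hvZ => h.2.2.2 v (σ.dir_mem hvw).1 (fun hr => hr.2 w hvw) hvZ⟩

section Forward

variable {a p q x y v : V} {l : Link} {s : List (Link × V)}

def walkGraph (a : V) (s : List (Link × V)) : MixedGraph V where
  verts := {u | u ∈ pathVerts a s}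
  dir p q := IsStep a s p .fwd q ∨ IsStep a s q .bwd p
  bi p q := IsStep a s p .both q ∨ IsStep a s q .both p
  dir_mem := by
    rintro p q (h | h)
    exacts [⟨h.left_mem, h.right_mem⟩, ⟨h.right_mem, h.left_mem⟩]
  bi_mem := by
    rintro p q (h | h)
    exacts [⟨h.left_mem, h.right_mem⟩, ⟨h.right_mem, h.left_mem⟩]
  bi_symm := fun _ _ h => h.symm

lemma IsStep.walkGraph_adj (h : IsStep a s p l q) : (walkGraph a s).Adj p q := by
  cases l
  exacts [Or.inl (Or.inl h), Or.inr (Or.inl (Or.inr h)), Or.inr (Or.inr (Or.inl h))]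

lemma walkGraph_isSubgraph (hs : G.IsWalk a s) (ha : a ∈ G.verts) :
    (walkGraph a s).IsSubgraph G := by
  refine ⟨fun _ hu => hs.mem_verts ha hu, ?_, ?_⟩
  · rintro p q (h | h)
    exacts [hs.linkOk h, hs.linkOk h]
  · rintro p q (h | h)
    exacts [hs.linkOk h, G.bi_symm (hs.linkOk h)]

lemma not_mem_of_walkGraph_dir
    (hact : List.IsChain (fun st st' => G.ActiveTriple Z st.1 st.2 st'.1) s) (haZ : a ∉ Z)
    (hbZ : lastVert a s ∉ Z) (h : (walkGraph a s).dir p q) : p ∉ Z := by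
  have hact := isChain_iff_forall_mem_junctions.1 hact
  rcases h with h | h
  · rcases h.eq_or_mem_junctions_left with rfl | ⟨l₀, hj⟩
    exacts [haZ, (activeTriple_iff.1 (hact _ hj)).1 (Or.inr rfl)]
  · rcases h.eq_or_mem_junctions_right with rfl | ⟨l₂, hj⟩
    exacts [hbZ, (activeTriple_iff.1 (hact _ hj)).1 (Or.inl rfl)]

def descentGraph (G : MixedGraph V) (Z : Set V) : MixedGraph V where
  verts := G.verts ∩ G.AncSet Z
  dir p q := G.dir p q ∧ p ∉ Z ∧ q ∈ G.AncSet Z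
  bi _ _ := False
  dir_mem := fun _ _ h =>
    ⟨⟨(G.dir_mem h.1).1, h.2.2.imp fun _ hz => ⟨hz.1, hz.2.head h.1⟩⟩, (G.dir_mem h.1).2, h.2.2⟩
  bi_mem := fun _ _ h => h.elim
  bi_symm := fun _ _ h => h

lemma descentGraph_isSubgraph : (G.descentGraph Z).IsSubgraph G :=
  ⟨Set.inter_subset_left, fun _ _ h => h.1, fun _ _ h => h.elim⟩

lemma exists_descentGraph_dir (hv : v ∈ G.AncSet Z) (hvZ : v ∉ Z) :
    ∃ w, (G.descentGraph Z).dir v w := by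
  obtain ⟨z, hz, hvz⟩ := hv
  rcases Relation.ReflTransGen.cases_head hvz with rfl | ⟨w, hvw, hwz⟩
  exacts [absurd hz hvZ, ⟨w, hvw, hvZ, z, hz, hwz⟩]

lemma roots_walkGraph_union_descentGraph
    (hact : List.IsChain (fun st st' => G.ActiveTriple Z st.1 st.2 st'.1) s) (ha : a ∈ X)
    (hb : lastVert a s ∈ Y) :
    ((walkGraph a s).union (G.descentGraph Z)).roots ⊆ X ∪ Y ∪ Z := by
  rintro r ⟨hr, hno⟩
  simp only [union, not_or, forall_and] at hno
  have hanc : r ∈ G.AncSet Z → r ∈ Z := fun h =>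
    by_contra fun hrZ => (exists_descentGraph_dir h hrZ).elim hno.2
  rcases hr with hr | hr
  · rcases eq_or_mem_junctions_of_mem_pathVerts hr with rfl | rfl | ⟨l, l', hj⟩
    · exact Or.inl (Or.inl ha)
    · exact Or.inl (Or.inr hb)
    · obtain ⟨⟨p, hp⟩, ⟨w, hw⟩⟩ := isStep_of_mem_junctions (a := a) hj
      refine Or.inr (hanc ((activeTriple_iff.1 (isChain_iff_forall_mem_junctions.1 hact _ hj)).2
        ?_ ?_))
      · rintro rfl
        exact hno.1 p (Or.inr hp)
      · rintro rfl
        exact hno.1 w (Or.inl hw)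
  · exact Or.inr (hanc hr.2)

lemma isWitness_component (hHG : H.IsSubgraph G) (hx : x ∈ H.verts ∩ X) (hy : y ∈ H.verts ∩ Y)
    (hxy : H.Reachable x y) (hroots : H.roots ⊆ X ∪ Y ∪ Z)
    (hZ : ∀ ⦃v w⦄, H.dir v w → v ∉ Z) : G.IsWitness X Y Z (H.component x) :=
  ⟨(restrict_isSubgraph _ _).trans hHG, connected_component hx.1, ⟨x, ⟨hx.1, .refl⟩, hx.2⟩,
    ⟨y, ⟨hy.1, hxy⟩, hy.2⟩, roots_component_subset.trans hroots, fun _ _ h => hZ h.1⟩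

lemma exists_isWitness (hXV : X ⊆ G.verts) (h : G.DConnected X Y Z) :
    ∃ σ, G.IsWitness X Y Z σ := by
  obtain ⟨a, s, hs, ha, hb, haZ, hbZ, hact⟩ := h
  let W := (walkGraph a s).union (G.descentGraph Z)
  have hWG : W.IsSubgraph G :=
    (walkGraph_isSubgraph hs.1 (hXV ha)).union descentGraph_isSubgraph
  have hab : W.Reachable a (lastVert a s) :=
    (reachable_of_mem_pathVerts (fun _ _ _ h => h.walkGraph_adj)
      (lastVert_mem_pathVerts a s)).mono (isSubgraph_union_left _ _)
  refine ⟨_, isWitness_component hWG ⟨Or.inl (self_mem_pathVerts a s), ha⟩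
    ⟨Or.inl (lastVert_mem_pathVerts a s), hb⟩ hab (roots_walkGraph_union_descentGraph hact ha hb)
    ?_⟩
  rintro v w (h | h)
  exacts [not_mem_of_walkGraph_dir hact haZ hbZ h, h.2.1]

lemma exists_minimal_isWitness [Finite V] (h : ∃ σ, G.IsWitness X Y Z σ) :
    ∃ σ, G.IsWitness X Y Z σ ∧ ∀ τ, G.IsWitness X Y Z τ → ¬ τ.edgeSets < σ.edgeSets :=
  (InvImage.wf edgeSets wellFounded_lt).has_min {σ | G.IsWitness X Y Z σ} h

end Forward

section Minimal

variable {p v w w' w₁ w₂ x y : V}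

lemma IsWitness.of_isSubgraph (hσ : G.IsWitness X Y Z σ) (hτ : H.IsSubgraph σ)
    (hconn : H.Connected) (hX : (H.verts ∩ X).Nonempty) (hY : (H.verts ∩ Y).Nonempty)
    (hroots : H.roots ⊆ σ.roots) : G.IsWitness X Y Z H :=
  ⟨hτ.trans hσ.isSubgraph, hconn, hX, hY, hroots.trans hσ.roots_subset,
    fun _ _ h => hσ.not_mem_of_dir (hτ.2.1 h)⟩

/-- Otherwise the component of `x` after the deletion would be a smaller witness. -/
lemma IsWitness.not_reachable_deleteDir (hσ : G.IsWitness X Y Z σ)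
    (hmin : ∀ τ, G.IsWitness X Y Z τ → ¬ τ.edgeSets < σ.edgeSets) (hw : σ.dir v w)
    (hw' : σ.dir v w') (hne : w' ≠ w)
    (hx : x ∈ σ.verts ∩ X) (hy : y ∈ σ.verts ∩ Y) : ¬ (σ.deleteDir v w).Reachable x y := by
  intro hxy
  have hroots : (σ.deleteDir v w).roots ⊆ σ.roots := by
    rintro r ⟨hr, hno⟩
    refine ⟨hr, fun t ht => ?_⟩
    by_cases hrt : r = v ∧ t = w
    · obtain ⟨rfl, rfl⟩ := hrt
      exact hno w' ⟨hw', fun h => hne h.2⟩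
    · exact hno t ⟨ht, hrt⟩
  refine hmin _ (isWitness_component ((deleteDir_isSubgraph σ v w).trans hσ.isSubgraph) hx hy hxy
    (hroots.trans hσ.roots_subset) fun _ _ h => hσ.not_mem_of_dir h.1) ?_
  exact (edgeSets_mono (restrict_isSubgraph _ _)).trans_lt
    (edgeSets_lt_of_dir (deleteDir_isSubgraph σ v w) hw fun h => h.2 ⟨rfl, rfl⟩)

lemma Connected.reachable_deleteDir_deleteDir (hH : H.Connected) (hv : v ∈ H.verts)
    (hp : p ∈ H.verts) :
    ((H.deleteDir v w₁).deleteDir v w₂).Reachable v p ∨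
      ((H.deleteDir v w₁).deleteDir v w₂).Reachable w₁ p ∨
      ((H.deleteDir v w₁).deleteDir v w₂).Reachable w₂ p := by
  rcases Reachable.deleteDir (v := v) (w := w₁) (hH.2 v hv p hp) with h | h | h <;>
    rcases h.deleteDir (v := v) (w := w₂) with h | h | h <;> tauto

lemma IsWitness.not_reachable_fork (hσ : G.IsWitness X Y Z σ)
    (hmin : ∀ τ, G.IsWitness X Y Z τ → ¬ τ.edgeSets < σ.edgeSets) (h₁ : σ.dir v w₁)
    (h₂ : σ.dir v w₂) (hne : w₁ ≠ w₂) :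
    ¬ ((σ.deleteDir v w₁).deleteDir v w₂).Reachable w₁ v := by
  intro hv
  obtain ⟨x, hx⟩ := hσ.inter_left
  obtain ⟨y, hy⟩ := hσ.inter_right
  have hδ := deleteDir_isSubgraph (σ.deleteDir v w₁) v w₂
  have hvw₂ : (σ.deleteDir v w₁).Adj v w₂ := Or.inl ⟨h₂, fun h => hne h.2.symm⟩
  have hall : ∀ p ∈ σ.verts, (σ.deleteDir v w₁).Reachable v p := fun p hp => by
    rcases hσ.connected.reachable_deleteDir_deleteDir (σ.dir_mem h₁).1 hp with h | h | h
    exacts [h.mono hδ, Reachable.mono hδ (hv.symm.trans h), (h.mono hδ).head hvw₂]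
  exact hσ.not_reachable_deleteDir hmin h₁ h₂ hne.symm hx hy
    ((hall x hx.1).symm.trans (hall y hy.1))

lemma IsWitness.reachable_fork (hσ : G.IsWitness X Y Z σ)
    (hmin : ∀ τ, G.IsWitness X Y Z τ → ¬ τ.edgeSets < σ.edgeSets) (h₁ : σ.dir v w₁)
    (h₂ : σ.dir v w₂) (hne : w₁ ≠ w₂) (hx : x ∈ σ.verts ∩ X) (hy : y ∈ σ.verts ∩ Y) :
    let δ := (σ.deleteDir v w₁).deleteDir v w₂
    (δ.Reachable w₁ x ∨ δ.Reachable w₂ x) ∧ (δ.Reachable w₁ y ∨ δ.Reachable w₂ y) := by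
  intro δ
  have hδ₁ : δ.IsSubgraph (σ.deleteDir v w₁) := deleteDir_isSubgraph _ _ _
  have hδ₂ : δ.IsSubgraph (σ.deleteDir v w₂) := by
    simp only [δ]
    rw [deleteDir_comm]
    exact deleteDir_isSubgraph _ _ _
  have hv : v ∈ σ.verts := (σ.dir_mem h₁).1
  have hvw₁ : (σ.deleteDir v w₂).Adj v w₁ := Or.inl ⟨h₁, fun h => hne h.2⟩
  have hvw₂ : (σ.deleteDir v w₁).Adj v w₂ := Or.inl ⟨h₂, fun h => hne h.2.symm⟩
  have hside : ∀ p q, p ∈ σ.verts → q ∈ σ.verts → ¬(σ.deleteDir v w₁).Reachable p q →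
      ¬(σ.deleteDir v w₂).Reachable p q → δ.Reachable w₁ p ∨ δ.Reachable w₂ p := by
    intro p q hp hq hpq₁ hpq₂
    refine (hσ.connected.reachable_deleteDir_deleteDir hv hp).resolve_left fun hvp => ?_
    rcases hσ.connected.reachable_deleteDir_deleteDir hv hq with hvq | hvq | hvq
    · exact hpq₁ (Reachable.mono hδ₁ (hvp.symm.trans hvq))
    · exact hpq₂ (((hvp.symm.mono hδ₂).tail hvw₁).trans (hvq.mono hδ₂))
    · exact hpq₁ (((hvp.symm.mono hδ₁).tail hvw₂).trans (hvq.mono hδ₁))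
  have hbr₁ := hσ.not_reachable_deleteDir hmin h₁ h₂ hne.symm hx hy
  have hbr₂ := hσ.not_reachable_deleteDir hmin h₂ h₁ hne hx hy
  exact ⟨hside x y hx.1 hy.1 hbr₁ hbr₂,
    hside y x hy.1 hx.1 (fun h => hbr₁ h.symm) (fun h => hbr₂ h.symm)⟩

lemma IsWitness.isWitness_restrict_fork (hσ : G.IsWitness X Y Z σ)
    (hmin : ∀ τ, G.IsWitness X Y Z τ → ¬ τ.edgeSets < σ.edgeSets) (h₁ : σ.dir v w₁)
    (h₂ : σ.dir v w₂) (hne : w₁ ≠ w₂) :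
    let δ := (σ.deleteDir v w₁).deleteDir v w₂
    G.IsWitness X Y Z (σ.restrict {p | p = v ∨ δ.Reachable w₁ p ∨ δ.Reachable w₂ p}) := by
  intro δ
  set T : Set V := {p | p = v ∨ δ.Reachable w₁ p ∨ δ.Reachable w₂ p}
  have hδσ : δ.IsSubgraph σ := (deleteDir_isSubgraph _ _ _).trans (deleteDir_isSubgraph _ _ _)
  have hw₁T : w₁ ∈ T := Or.inr (Or.inl .refl)
  have hw₂T : w₂ ∈ T := Or.inr (Or.inr .refl)
  have hreach : ∀ p ∈ (σ.restrict T).verts, (σ.restrict T).Reachable v p := by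
    rintro p ⟨-, rfl | h | h⟩
    · exact .refl
    · exact (h.restrict hδσ fun q hq => Or.inr (Or.inl hq)).head (Or.inl ⟨h₁, Or.inl rfl, hw₁T⟩)
    · exact (h.restrict hδσ fun q hq => Or.inr (Or.inr hq)).head (Or.inl ⟨h₂, Or.inl rfl, hw₂T⟩)
  have hroots : (σ.restrict T).roots ⊆ σ.roots := by
    refine roots_restrict_subset fun r hr t ht => ?_
    by_cases hrv : r = v
    · exact ⟨w₁, hw₁T, hrv ▸ h₁⟩
    have hδrt : δ.Adj r t := Or.inl ⟨⟨ht, fun h => hrv h.1⟩, fun h => hrv h.1⟩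
    rcases hr with hr | hr | hr
    exacts [absurd hr hrv, ⟨t, Or.inr (Or.inl (hr.tail hδrt)), ht⟩,
      ⟨t, Or.inr (Or.inr (hr.tail hδrt)), ht⟩]
  obtain ⟨x, hx⟩ := hσ.inter_left
  obtain ⟨y, hy⟩ := hσ.inter_right
  obtain ⟨hxT, hyT⟩ := hσ.reachable_fork hmin h₁ h₂ hne hx hy
  refine hσ.of_isSubgraph (restrict_isSubgraph σ T) ⟨⟨v, (σ.dir_mem h₁).1, Or.inl rfl⟩,
    fun p hp q hq => (hreach p hp).symm.trans (hreach q hq)⟩ ⟨x, ⟨hx.1, Or.inr hxT⟩, hx.2⟩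
    ⟨y, ⟨hy.1, Or.inr hyT⟩, hy.2⟩ hroots

/-- Otherwise restricting `σ` to `v` and the two sides of the fork would give a smaller
witness. -/
lemma IsWitness.not_adj_of_fork (hG : G.IsADMG) (hσ : G.IsWitness X Y Z σ)
    (hmin : ∀ τ, G.IsWitness X Y Z τ → ¬ τ.edgeSets < σ.edgeSets) (h₁ : σ.dir v w₁)
    (h₂ : σ.dir v w₂) (hne : w₁ ≠ w₂) (u : V) :
    ¬ ((σ.deleteDir v w₁).deleteDir v w₂).Adj v u := by
  intro hvu
  set δ := (σ.deleteDir v w₁).deleteDir v w₂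
  have hδσ : δ.IsSubgraph σ := (deleteDir_isSubgraph _ _ _).trans (deleteDir_isSubgraph _ _ _)
  refine hmin _ (hσ.isWitness_restrict_fork hmin h₁ h₂ hne)
    (edgeSets_restrict_lt (hvu.mono hδσ) ?_)
  rintro (rfl | h | h)
  · exact hG.ne_of_adj ((hvu.mono hδσ).mono hσ.isSubgraph) rfl
  · exact hσ.not_reachable_fork hmin h₁ h₂ hne (h.tail hvu.symm)
  · have hw₂v := hσ.not_reachable_fork hmin h₂ h₁ hne.symm
    rw [deleteDir_comm] at hw₂v
    exact hw₂v (h.tail hvu.symm)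

lemma IsWitness.isSOI (hG : G.IsADMG) (hσ : G.IsWitness X Y Z σ)
    (hmin : ∀ τ, G.IsWitness X Y Z τ → ¬ τ.edgeSets < σ.edgeSets) : σ.IsSOI := by
  refine ⟨hG.mono hσ.isSubgraph, hσ.connected, fun v _ => ?_⟩
  by_cases hv : ∀ ⦃w₁ w₂⦄, σ.dir v w₁ → σ.dir v w₂ → w₁ = w₂
  · exact Or.inl hv
  simp only [not_forall] at hv
  obtain ⟨w₁, w₂, h₁, h₂, hne⟩ := hv
  have hno := hσ.not_adj_of_fork hG hmin h₁ h₂ hne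
  have hvw : ∀ ⦃w⦄, σ.dir v w → v ≠ w := fun _ h => hG.ne_of_adj (Or.inl (hσ.isSubgraph.2.1 h))
  refine Or.inr ⟨⟨w₁, w₂, hne, h₁, h₂, fun w hw => ?_⟩, fun w hw => hno w ?_,
    fun w hw => hno w (Or.inr (Or.inr hw))⟩
  · by_contra hw'
    simp only [not_or] at hw'
    exact hno w (Or.inl ⟨⟨hw, fun h => hw'.1 h.2⟩, fun h => hw'.2 h.2⟩)
  · exact Or.inr (Or.inl ⟨⟨hw, fun h => hvw h₁ h.2⟩, fun h => hvw h₂ h.2⟩)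

end Minimal

end MixedGraph

theorem stmt0_general {V : Type} [Fintype V] (G : MixedGraph V) (hG : G.IsADMG)
    (X Y Z : Set V) (hXV : X ⊆ G.verts)
    (hXZ : Disjoint X Z) (hYZ : Disjoint Y Z) :
    G.DConnected X Y Z ↔
      ∃ σ : MixedGraph V, σ.IsSubgraph G ∧ σ.IsSOI ∧ σ.Connects X Y Z := by
  constructor
  · intro h
    obtain ⟨σ, hσ, hmin⟩ := exists_minimal_isWitness (exists_isWitness hXV h)
    exact ⟨σ, hσ.isSubgraph, hσ.isSOI hG hmin, hσ.connects⟩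
  · rintro ⟨σ, hσG, hσ, hconn⟩
    exact (IsWitness.of_connects hσG hσ.2.1 hconn).dConnected hG hXZ hYZ

/-- D-connection with structures of interest.
Let `G` be an ADMG and `X, Y, Z` pairwise disjoint subsets of its vertices.
Then `X` and `Y` are d-connected given `Z` in `G` iff `G` contains a structure
of interest `σ` (as a subgraph) that connects `X` and `Y` under `Z`. -/
theorem stmt0 {V : Type} [Fintype V] (G : MixedGraph V) (hG : G.IsADMG)
    (X Y Z : Set V) (hXV : X ⊆ G.verts) (hYV : Y ⊆ G.verts) (hZV : Z ⊆ G.verts)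
    (hXY : Disjoint X Y) (hXZ : Disjoint X Z) (hYZ : Disjoint Y Z) :
    G.DConnected X Y Z ↔
      ∃ σ : MixedGraph V, σ.IsSubgraph G ∧ σ.IsSOI ∧ σ.Connects X Y Z :=
  stmt0_general G hG X Y Z hXV hXZ hYZ
end

section
/- Let G^C be a C-DAG and let G^m be a compatible ADMG in which, within each cluster, the indices of the vertices follow a topological order of G^m. Suppose G^m contains a directed edge V_i → W_w from the i-th vertex of a cluster V to a vertex W_w, and let j < i. Then adding the directed edge V_j → W_w to G^m creates no directed cycle, and the graph obtained by adding V_j → W_w (and, if desired, additionally deleting V_i → W_w) is an ADMG compatible with G^C. -/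
/-!
Let `t` be a topological numbering of `G^m` whose restriction to each cluster is increasing in
the index (`a = V_i`, `a' = V_j`). Then `t a' < t a < t w`, so `t` still increases along every
edge of `G^m + (a' → w)` and of `G^m + (a' → w) - (a → w)`, which are therefore acyclic. Both
graphs induce the same cluster graph as `G^m`: the new edge `a' → w` lies over the cluster edge
`π a → π w` that `a → w` already induces, and it keeps inducing that edge once `a → w` is removed.
-/

namespace MixedGraph

variable {V C α : Type*}

theorem acyclic_of_dir_lt [Preorder α] {G : MixedGraph V} (t : V → α)
    (ht : ∀ ⦃x y : V⦄, G.dir x y → t x < t y) : G.Acyclic := by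
  intro x y hxy hyx
  have hle : ∀ ⦃u v : V⦄, G.Anc u v → t u ≤ t v := fun u v huv => by
    induction huv with
    | refl => exact le_rfl
    | tail _ hbc ih => exact ih.trans (ht hbc).le
  exact (ht hxy).not_ge (hle hyx)

theorem isADMG_of_dir_lt [Preorder α] {G : MixedGraph V} (t : V → α)
    (ht : ∀ ⦃x y : V⦄, G.dir x y → t x < t y) (hbi : ∀ v, ¬ G.bi v v) : G.IsADMG :=
  ⟨acyclic_of_dir_lt t ht, fun _ hv => (ht hv).ne rfl, hbi⟩

theorem addDir_dir_lt [Preorder α] {G : MixedGraph V} {t : V → α}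
    (ht : ∀ ⦃x y : V⦄, G.dir x y → t x < t y) {a b : V} (hab : t a < t b) :
    ∀ ⦃x y : V⦄, (G.addDir a b).dir x y → t x < t y := by
  rintro x y (hxy | ⟨rfl, rfl⟩)
  exacts [ht hxy, hab]

def clusterDir (π : V → C) (G : MixedGraph V) (c d : C) : Prop :=
  ∃ x y, π x = c ∧ π y = d ∧ G.dir x y

theorem clusterDir_addDir_iff {π : V → C} {G : MixedGraph V} {a a' w : V}
    (hcl : π a' = π a) (hdir : G.dir a w) (c d : C) :
    clusterDir π (G.addDir a' w) c d ↔ clusterDir π G c d := by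
  constructor
  · rintro ⟨x, y, rfl, rfl, hxy | ⟨rfl, rfl⟩⟩
    exacts [⟨x, y, rfl, rfl, hxy⟩, ⟨a, y, hcl.symm, rfl, hdir⟩]
  · rintro ⟨x, y, rfl, rfl, hxy⟩
    exact ⟨x, y, rfl, rfl, Or.inl hxy⟩

theorem clusterDir_deleteDir_addDir_iff {π : V → C} {G : MixedGraph V} {a a' w : V}
    (hcl : π a' = π a) (hne : a' ≠ a) (hdir : G.dir a w) (c d : C) :
    clusterDir π ((G.addDir a' w).deleteDir a w) c d ↔ clusterDir π G c d := by
  constructor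
  · rintro ⟨x, y, hx, hy, hxy, -⟩
    exact (clusterDir_addDir_iff hcl hdir c d).mp ⟨x, y, hx, hy, hxy⟩
  · rintro ⟨x, y, rfl, rfl, hxy⟩
    by_cases hxy' : x = a ∧ y = w
    · obtain ⟨rfl, rfl⟩ := hxy'
      exact ⟨a', y, hcl, rfl, Or.inr ⟨rfl, rfl⟩, fun h => hne h.1⟩
    · exact ⟨x, y, rfl, rfl, Or.inl hxy, hxy'⟩

theorem Compatible.of_clusterDir_iff {π : V → C} {GC : MixedGraph C} {G H : MixedGraph V}
    (hG : Compatible π GC G) (hH : H.IsADMG) (hverts : H.verts = Set.univ) (hbi : H.bi = G.bi)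
    (hdir : ∀ c d, clusterDir π H c d ↔ clusterDir π G c d) : Compatible π GC H :=
  ⟨hH, hverts, fun c d => (hG.2.2.1 c d).trans (hdir c d).symm, hbi ▸ hG.2.2.2⟩

end MixedGraph

open MixedGraph

theorem stmt3_general {V C : Type} [LinearOrder V]
    (π : V → C)
    (GC : MixedGraph C)
    (G : MixedGraph V) (hG : MixedGraph.Compatible π GC G)
    (htopo : MixedGraph.FollowsTopo π G)
    (a a' w : V) (hcl : π a' = π a) (hlt : a' < a) (hdir : G.dir a w) :
    (G.addDir a' w).Acyclic ∧
    MixedGraph.Compatible π GC (G.addDir a' w) ∧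
    MixedGraph.Compatible π GC ((G.addDir a' w).deleteDir a w) := by
  obtain ⟨t, -, htdir, htcl⟩ := htopo
  have hpot : ∀ ⦃x y : V⦄, (G.addDir a' w).dir x y → t x < t y :=
    addDir_dir_lt htdir ((htcl hcl hlt).trans (htdir hdir))
  have hadd : Compatible π GC (G.addDir a' w) :=
    hG.of_clusterDir_iff (isADMG_of_dir_lt t hpot hG.1.2.2) (by simp [addDir, hG.2.1]) rfl
      (clusterDir_addDir_iff hcl hdir)
  have hdel : Compatible π GC ((G.addDir a' w).deleteDir a w) :=
    hG.of_clusterDir_iff (isADMG_of_dir_lt t (fun _ _ h => hpot h.1) hG.1.2.2) hadd.2.1 rfl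
      (clusterDir_deleteDir_addDir_iff hcl hlt.ne hdir)
  exact ⟨hadd.1.1, hadd, hdel⟩

/-- move an outgoing arrow up. If `G^m` (compatible, with
within-cluster indices following a topological order) contains `V_i → W_w` and
`j < i` (here `a = V_i`, `a' = V_j`, same cluster, `a' < a`), then adding
`V_j → W_w` creates no directed cycle and the resulting graph (and the one
additionally deleting `V_i → W_w`) is an ADMG compatible with `G^C`. -/
theorem stmt3 {V C : Type} [Fintype V] [LinearOrder V]
    (π : V → C) (hπ : Function.Surjective π)
    (GC : MixedGraph C) (hGCverts : GC.verts = Set.univ)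
    (G : MixedGraph V) (hG : MixedGraph.Compatible π GC G)
    (htopo : MixedGraph.FollowsTopo π G)
    (a a' w : V) (hcl : π a' = π a) (hlt : a' < a) (hdir : G.dir a w) :
    (G.addDir a' w).Acyclic ∧
    MixedGraph.Compatible π GC (G.addDir a' w) ∧
    MixedGraph.Compatible π GC ((G.addDir a' w).deleteDir a w) :=
  stmt3_general π GC G hG htopo a a' w hcl hlt hdir
end

section
/- Let G^C be a C-DAG, let G_can be its canonical compatible graph, and let G^m be an ADMG compatible with G^C in which, within each cluster, the indices of the vertices follow a topological order of G^m. Then the union G_can ∪ G^m is acyclic and is an ADMG compatible with G^C. -/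
open MixedGraph

/-! The topological order `t` of `G` stays a strict ranking of the union: an edge `a → b` of
the canonical graph between distinct clusters `A ≠ B` comes from some edge `a' → b'` of `G`
with `a' ∈ A`, `b' ∈ B`, and since `a` is the first vertex of `A` and `b` the last of `B`,
`t a ≤ t a' < t b' ≤ t b`. Edges of the canonical graph add no cluster-level edges, so the
union still induces `GC`. -/

namespace MixedGraph

variable {V C α : Type*}

section Rank

variable [Preorder α] {G : MixedGraph V} {f : V → α}

theorem Anc.rank_le (hf : ∀ ⦃a b⦄, G.dir a b → f a < f b) {a b : V} (h : G.Anc a b) :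
    f a ≤ f b := by
  induction h with
  | refl => exact le_rfl
  | tail _ hd ih => exact ih.trans (hf hd).le

theorem isADMG_of_rank (hf : ∀ ⦃a b⦄, G.dir a b → f a < f b) (hbi : ∀ v, ¬ G.bi v v) :
    G.IsADMG :=
  ⟨fun _ _ hab hba => lt_irrefl _ ((hf hab).trans_le (hba.rank_le hf)),
    fun _ h => lt_irrefl _ (hf h), hbi⟩

end Rank

theorem canonicalGraph_dir_rank_lt [LinearOrder V] [Preorder α] {π : V → C}
    {GC : MixedGraph C} {G : MixedGraph V} {t : V → α}
    (hGC : ∀ c d, GC.dir c d → ∃ a b, π a = c ∧ π b = d ∧ G.dir a b)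
    (ht_dir : ∀ ⦃a b⦄, G.dir a b → t a < t b)
    (ht_cluster : ∀ ⦃a b⦄, π a = π b → a < b → t a < t b) ⦃a b : V⦄
    (h : (canonicalGraph π GC).dir a b) : t a < t b := by
  have ht_mono : ∀ ⦃a b⦄, π a = π b → a ≤ b → t a ≤ t b := fun a b hab hle =>
    hle.eq_or_lt.elim (fun h => h ▸ le_rfl) fun h => (ht_cluster hab h).le
  rcases h with ⟨hab, -, hlt⟩ | ⟨-, hdir, ha, hb⟩
  · exact ht_cluster hab hlt
  · obtain ⟨a', b', ha', hb', hd⟩ := hGC _ _ hdir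
    calc t a ≤ t a' := ht_mono ha'.symm (ha.2 ha')
      _ < t b' := ht_dir hd
      _ ≤ t b := ht_mono hb' (hb.2 hb')

theorem canonicalGraph_dir_map [LinearOrder V] {π : V → C} {GC : MixedGraph C} ⦃a b : V⦄
    (h : (canonicalGraph π GC).dir a b) : GC.dir (π a) (π b) := by
  rcases h with ⟨-, hd, -⟩ | ⟨-, hd, -⟩ <;> exact hd

theorem exists_map_or_iff {π : V → C} {S : C → C → Prop} {R R' : V → V → Prop}
    (hR : ∀ c d, S c d ↔ ∃ a b, π a = c ∧ π b = d ∧ R a b)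
    (hR' : ∀ ⦃a b⦄, R' a b → S (π a) (π b)) (c d : C) :
    S c d ↔ ∃ a b, π a = c ∧ π b = d ∧ (R' a b ∨ R a b) := by
  refine ⟨fun h => ?_, ?_⟩
  · obtain ⟨a, b, ha, hb, hab⟩ := (hR c d).1 h
    exact ⟨a, b, ha, hb, Or.inr hab⟩
  · rintro ⟨a, b, rfl, rfl, hab | hab⟩
    · exact hR' hab
    · exact (hR _ _).2 ⟨a, b, rfl, rfl, hab⟩

theorem Compatible.union_left {π : V → C} {GC : MixedGraph C} {G H : MixedGraph V}
    (hG : Compatible π GC G) (hH_dir : ∀ ⦃a b⦄, H.dir a b → GC.dir (π a) (π b))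
    (hH_bi : ∀ ⦃a b⦄, H.bi a b → GC.bi (π a) (π b)) (hadmg : (H.union G).IsADMG) :
    Compatible π GC (H.union G) :=
  ⟨hadmg, show H.verts ∪ G.verts = _ by rw [hG.2.1, Set.union_univ],
    exists_map_or_iff hG.2.2.1 hH_dir, exists_map_or_iff hG.2.2.2 hH_bi⟩

end MixedGraph

theorem stmt9_general {V C : Type} [LinearOrder V]
    (π : V → C) (GC : MixedGraph C) (G : MixedGraph V) (hG : MixedGraph.Compatible π GC G)
    (htopo : MixedGraph.FollowsTopo π G) :
    ((MixedGraph.canonicalGraph π GC).union G).Acyclic ∧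
    MixedGraph.Compatible π GC ((MixedGraph.canonicalGraph π GC).union G) := by
  obtain ⟨t, -, ht_dir, ht_cluster⟩ := htopo
  have hrank : ∀ ⦃a b⦄, ((canonicalGraph π GC).union G).dir a b → t a < t b := by
    rintro a b (h | h)
    · exact canonicalGraph_dir_rank_lt (fun c d => (hG.2.2.1 c d).1) ht_dir ht_cluster h
    · exact ht_dir h
  have hadmg : ((canonicalGraph π GC).union G).IsADMG := by
    refine isADMG_of_rank hrank ?_
    rintro v (h | h)
    · exact h.1 rfl
    · exact hG.1.2.2 v h
  exact ⟨hadmg.1, hG.union_left canonicalGraph_dir_map (fun _ _ h => h.2) hadmg⟩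

/-- The union of the canonical compatible graph with any
compatible graph (whose within-cluster indices follow a topological order) is
acyclic and compatible. -/
theorem stmt9 {V C : Type} [Fintype V] [LinearOrder V]
    (π : V → C) (hπ : Function.Surjective π)
    (GC : MixedGraph C) (hGCverts : GC.verts = Set.univ)
    (G : MixedGraph V) (hG : MixedGraph.Compatible π GC G)
    (htopo : MixedGraph.FollowsTopo π G) :
    ((MixedGraph.canonicalGraph π GC).union G).Acyclic ∧
    MixedGraph.Compatible π GC ((MixedGraph.canonicalGraph π GC).union G) :=
  stmt9_general π GC G hG htopo
end

section
/- Let G^C be a C-DAG and let G_u be its unfolded graph. Then every ADMG G^m compatible with G^C is a subgraph of G_u up to a permutation of the indices within each cluster: there exists a bijection of V^m that maps each cluster onto itself such that the relabeled graph G^m has all of its directed edges among the directed edges of G_u and all of its bidirected edges among the bidirected edges of G_u. -/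
open MixedGraph

/-! Fix a topological ranking `u` of the compatible ADMG `G` and relabel every cluster so that
its index order becomes the `u`-order. Every directed edge of the canonical graph then increases
`u` of the relabelled vertices: within a cluster by construction, and from the first vertex of
a cluster `X` to the last vertex of a cluster `Y` because some edge of `G` leads from `X` to
`Y`. The relabelled edges of `G` increase `u` as well, so adding any of them to the canonical
graph keeps it acyclic, i.e. it is eligible. -/

theorem exists_equiv_strictMono_comp {S W : Type*} [Finite S] [LinearOrder S] [LinearOrder W]
    {u : S → W} (hu : Function.Injective u) : ∃ f : S ≃ S, StrictMono (u ∘ f) := by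
  have := Fintype.ofFinite S
  let toRange : S ≃ Set.range u := Equiv.ofInjective u hu
  let iso : S ≃o Set.range u := (Fintype.orderIsoFinOfCardEq S rfl).symm.trans
    (Fintype.orderIsoFinOfCardEq _ (Fintype.card_congr toRange).symm)
  refine ⟨iso.toEquiv.trans toRange.symm, fun x y hxy => ?_⟩
  simpa [toRange, Equiv.apply_ofInjective_symm] using iso.strictMono hxy

theorem exists_perm_fiberwise_strictMono {V C W : Type*} [Finite V] [LinearOrder V]
    [LinearOrder W] (π : V → C) {u : V → W} (hu : Function.Injective u) :
    ∃ σ : Equiv.Perm V, (∀ v, π (σ v) = π v) ∧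
      ∀ ⦃a b : V⦄, π a = π b → a < b → u (σ a) < u (σ b) := by
  choose f hf using fun c => exists_equiv_strictMono_comp
    (u := fun x : {v // π v = c} => u x) (hu.comp Subtype.val_injective)
  have hσ : ∀ (c : C) (v : V) (hv : π v = c), Equiv.ofFiberEquiv f v = f c ⟨v, hv⟩ := by
    rintro _ v rfl
    rfl
  refine ⟨Equiv.ofFiberEquiv f, Equiv.ofFiberEquiv_map f, fun a b hab hlt => ?_⟩
  rw [hσ _ a rfl, hσ _ b hab.symm]
  exact hf (π a) (Subtype.mk_lt_mk.mpr hlt)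

theorem fiber_symm_apply {V C : Type*} {π : V → C} {σ : Equiv.Perm V}
    (hπσ : ∀ v, π (σ v) = π v) (v : V) : π (σ.symm v) = π v := by
  simpa using (hπσ (σ.symm v)).symm

namespace MixedGraph

variable {V C W : Type*}

theorem acyclic_of_strictMono [Preorder W] {G : MixedGraph V} {s : V → W}
    (hs : ∀ ⦃a b : V⦄, G.dir a b → s a < s b) : G.Acyclic := by
  have hle : ∀ ⦃x y : V⦄, G.Anc x y → s x ≤ s y := fun _ _ hxy => by
    induction hxy with
    | refl => exact le_rfl
    | tail _ hstep ih => exact ih.trans (hs hstep).le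
  exact fun a b hab hba => lt_irrefl _ ((hs hab).trans_le (hle hba))

theorem ncard_anc_lt_of_dir [Finite V] {G : MixedGraph V} (hG : G.Acyclic) {a b : V}
    (hab : G.dir a b) : {w | G.Anc w a}.ncard < {w | G.Anc w b}.ncard :=
  Set.ncard_lt_ncard ⟨fun _ hw => hw.tail hab, fun hsub => hG hab (hsub .refl)⟩

theorem Acyclic.exists_injective_rank [Finite V] [LinearOrder V] {G : MixedGraph V}
    (hG : G.Acyclic) :
    ∃ u : V → ℕ ×ₗ V, Function.Injective u ∧
      ∀ ⦃a b : V⦄, G.dir a b → u a < u b :=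
  ⟨fun v => toLex ({w | G.Anc w v}.ncard, v), fun _ _ h => congrArg (fun x => (ofLex x).2) h,
    fun _ _ hab => Prod.Lex.lt_iff.mpr (Or.inl (ncard_anc_lt_of_dir hG hab))⟩

section Relabel

variable [LinearOrder V] [Preorder W] {π : V → C} {GC : MixedGraph C} {G : MixedGraph V}
  {u : V → W} {σ : Equiv.Perm V}

theorem fiberwise_monotone (hσ : ∀ ⦃a b : V⦄, π a = π b → a < b → u (σ a) < u (σ b))
    {a b : V} (hab : π a = π b) (hle : a ≤ b) : u (σ a) ≤ u (σ b) := by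
  rcases hle.eq_or_lt with rfl | hlt
  · exact le_rfl
  · exact (hσ hab hlt).le

theorem canonicalGraph_dir_lt (hu : ∀ ⦃a b : V⦄, G.dir a b → u a < u b)
    (hπσ : ∀ v, π (σ v) = π v)
    (hσ : ∀ ⦃a b : V⦄, π a = π b → a < b → u (σ a) < u (σ b))
    (hdir : ∀ c d, GC.dir c d → ∃ a b, π a = c ∧ π b = d ∧ G.dir a b) {x y : V}
    (hxy : (canonicalGraph π GC).dir x y) : u (σ x) < u (σ y) := by
  rcases hxy with ⟨hπ, -, hlt⟩ | ⟨-, hGC, hx, hy⟩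
  · exact hσ hπ hlt
  obtain ⟨a, b, ha, hb, hab⟩ := hdir _ _ hGC
  have hxa : u (σ x) ≤ u a := by
    simpa using fiberwise_monotone hσ ((fiber_symm_apply hπσ a).trans ha).symm
      (hx.2 ((fiber_symm_apply hπσ a).trans ha))
  have hby : u b ≤ u (σ y) := by
    simpa using fiberwise_monotone hσ ((fiber_symm_apply hπσ b).trans hb)
      (hy.2 ((fiber_symm_apply hπσ b).trans hb))
  exact hxa.trans_lt ((hu hab).trans_le hby)

theorem unfoldedGraph_dir_symm_apply (hu : ∀ ⦃a b : V⦄, G.dir a b → u a < u b)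
    (hπσ : ∀ v, π (σ v) = π v)
    (hσ : ∀ ⦃a b : V⦄, π a = π b → a < b → u (σ a) < u (σ b))
    (hdir : ∀ c d, GC.dir c d ↔ ∃ a b, π a = c ∧ π b = d ∧ G.dir a b) {a b : V}
    (hab : G.dir a b) : (unfoldedGraph π GC).dir (σ.symm a) (σ.symm b) := by
  refine Or.inr ⟨?_, acyclic_of_strictMono (s := u ∘ σ) ?_⟩
  · rw [fiber_symm_apply hπσ, fiber_symm_apply hπσ]
    exact (hdir _ _).2 ⟨a, b, rfl, rfl, hab⟩
  · rintro x y (hxy | ⟨rfl, rfl⟩)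
    · exact canonicalGraph_dir_lt hu hπσ hσ (fun c d => (hdir c d).1) hxy
    · simpa using hu hab

theorem unfoldedGraph_bi_symm_apply (hπσ : ∀ v, π (σ v) = π v) (hirrefl : ∀ v, ¬ G.bi v v)
    (hbi : ∀ c d, GC.bi c d ↔ ∃ a b, π a = c ∧ π b = d ∧ G.bi a b) {a b : V}
    (hab : G.bi a b) : (unfoldedGraph π GC).bi (σ.symm a) (σ.symm b) := by
  refine ⟨σ.symm.injective.ne fun h => hirrefl a (h ▸ hab), ?_⟩
  rw [fiber_symm_apply hπσ, fiber_symm_apply hπσ]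
  exact (hbi _ _).2 ⟨a, b, rfl, rfl, hab⟩

end Relabel

end MixedGraph

theorem stmt10_general {V C : Type} [Fintype V] [LinearOrder V]
    (π : V → C)
    (GC : MixedGraph C)
    (G : MixedGraph V) (hG : MixedGraph.Compatible π GC G) :
    ∃ e : Equiv.Perm V, (∀ v, π (e v) = π v) ∧
      (∀ a b : V, G.dir a b → (MixedGraph.unfoldedGraph π GC).dir (e a) (e b)) ∧
      (∀ a b : V, G.bi a b → (MixedGraph.unfoldedGraph π GC).bi (e a) (e b)) := by
  obtain ⟨⟨hacyc, -, hirrefl⟩, -, hdir, hbi⟩ := hG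
  obtain ⟨u, hu_inj, hu⟩ := hacyc.exists_injective_rank
  obtain ⟨σ, hπσ, hσ⟩ := exists_perm_fiberwise_strictMono π hu_inj
  exact ⟨σ.symm, fiber_symm_apply hπσ,
    fun _ _ hab => unfoldedGraph_dir_symm_apply hu hπσ hσ hdir hab,
    fun _ _ hab => unfoldedGraph_bi_symm_apply hπσ hirrefl hbi hab⟩

/-- Every compatible graph is a subgraph of the unfolded
graph up to a permutation of the indices within each cluster. -/
theorem stmt10 {V C : Type} [Fintype V] [LinearOrder V]
    (π : V → C) (hπ : Function.Surjective π)
    (GC : MixedGraph C) (hGCverts : GC.verts = Set.univ)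
    (G : MixedGraph V) (hG : MixedGraph.Compatible π GC G) :
    ∃ e : Equiv.Perm V, (∀ v, π (e v) = π v) ∧
      (∀ a b : V, G.dir a b → (MixedGraph.unfoldedGraph π GC).dir (e a) (e b)) ∧
      (∀ a b : V, G.bi a b → (MixedGraph.unfoldedGraph π GC).bi (e a) (e b)) :=
  stmt10_general π GC G hG
end
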